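/- arXiv:1807.00264 — 12 statements merged into one kernel-verified Lean document; each statement's English description precedes it below -/
import Mathlib

section
/- Let λ ∈ ℝᵖ and suppose x*_λ ∈ X minimizes the augmented Lagrangian L_ρ(·;λ) over X. Then for every x ∈ X one has L_ρ(x;λ) ≥ L_ρ(x*_λ;λ) + (ρ/2)‖A(x − x*_λ)‖², i.e. the augmented Lagrangian grows quadratically away from its minimizer in the image of A. -/
open RealInnerProductSpace

lemma combo_norm_sq {E : Type*} [NormedAddCommGroup E] [InnerProductSpace ℝ E]
    (u v : E) (t : ℝ) :
    ‖(1 - t) • u + t • v‖ ^ 2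
      = (1 - t) * ‖u‖ ^ 2 + t * ‖v‖ ^ 2 - t * (1 - t) * ‖v - u‖ ^ 2 := by
  simp only [← real_inner_self_eq_norm_sq, inner_add_left, inner_add_right,
    inner_sub_left, inner_sub_right, real_inner_smul_left, real_inner_smul_right,
    real_inner_comm u v]
  ring

/-- quadratic growth of the augmented Lagrangian away from its
minimizer in the image of `A`. -/
theorem augmented_lagrangian_quadratic_growth
    (n p : ℕ)
    (f : EuclideanSpace ℝ (Fin n) → ℝ)
    (hf : ConvexOn ℝ Set.univ f)
    (X : Set (EuclideanSpace ℝ (Fin n)))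
    (hXne : X.Nonempty) (hXcompact : IsCompact X) (hXconvex : Convex ℝ X)
    (A : EuclideanSpace ℝ (Fin n) →ₗ[ℝ] EuclideanSpace ℝ (Fin p))
    (b : EuclideanSpace ℝ (Fin p))
    (ρ : ℝ) (hρ : 0 < ρ)
    (lam : EuclideanSpace ℝ (Fin p))
    (Lρ : EuclideanSpace ℝ (Fin n) → EuclideanSpace ℝ (Fin p) → ℝ)
    (hLρ : ∀ x μ, Lρ x μ = f x + ⟪A x - b, μ⟫ + ρ / 2 * ‖A x - b‖ ^ 2)
    (xstar : EuclideanSpace ℝ (Fin n))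
    (hxstar : xstar ∈ X)
    (hmin : ∀ x ∈ X, Lρ xstar lam ≤ Lρ x lam) :
    ∀ x ∈ X, Lρ x lam ≥ Lρ xstar lam + ρ / 2 * ‖A (x - xstar)‖ ^ 2 := by
  intro x hx
  set c : ℝ := ‖A (x - xstar)‖ ^ 2 with hc
  have hc0 : 0 ≤ c := sq_nonneg _
  -- key step inequality for every t ∈ (0,1]
  have key : ∀ t : ℝ, 0 < t → t ≤ 1 →
      Lρ xstar lam + ρ / 2 * (1 - t) * c ≤ Lρ x lam := by
    intro t ht0 ht1
    set y : EuclideanSpace ℝ (Fin n) := (1 - t) • xstar + t • x with hy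
    have hyX : y ∈ X := hXconvex hxstar hx (by linarith) (le_of_lt ht0) (by ring)
    have hAy : A y - b = (1 - t) • (A xstar - b) + t • (A x - b) := by
      simp only [hy, map_add, map_smul]
      module
    have hfy : f y ≤ (1 - t) * f xstar + t * f x :=
      hf.2 (Set.mem_univ xstar) (Set.mem_univ x) (by linarith) (le_of_lt ht0) (by ring)
    have hdiff : (A x - b) - (A xstar - b) = A (x - xstar) := by
      simp only [map_sub]; abel
    have hnorm : ‖A y - b‖ ^ 2
        = (1 - t) * ‖A xstar - b‖ ^ 2 + t * ‖A x - b‖ ^ 2 - t * (1 - t) * c := by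
      rw [hAy, combo_norm_sq, hdiff]
    have hinner : ⟪A y - b, lam⟫ = (1 - t) * ⟪A xstar - b, lam⟫ + t * ⟪A x - b, lam⟫ := by
      rw [hAy, inner_add_left, real_inner_smul_left, real_inner_smul_left]
    have hLy : Lρ y lam ≤ (1 - t) * Lρ xstar lam + t * Lρ x lam
        - ρ / 2 * (t * (1 - t) * c) := by
      rw [hLρ, hLρ, hLρ, hnorm, hinner]
      nlinarith [hfy]
    have hms := hmin y hyX
    have hmul : t * (Lρ x lam - (Lρ xstar lam + ρ / 2 * (1 - t) * c)) ≥ t * 0 := by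
      nlinarith [hms, hLy]
    have := le_of_mul_le_mul_left hmul ht0
    linarith
  -- pass to the limit t → 0⁺
  refine le_of_tendsto (f := fun t : ℝ => Lρ xstar lam + ρ / 2 * (1 - t) * c)
      (x := nhdsWithin 0 (Set.Ioi 0)) ?_ ?_
  · have h1 : Filter.Tendsto (fun t : ℝ => 1 - t) (nhds 0) (nhds (1 - 0)) :=
      Filter.Tendsto.sub tendsto_const_nhds Filter.tendsto_id
    have h2 : Filter.Tendsto (fun t : ℝ => Lρ xstar lam + ρ / 2 * (1 - t) * c)
        (nhds 0) (nhds (Lρ xstar lam + ρ / 2 * (1 - 0) * c)) :=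
      Filter.Tendsto.add tendsto_const_nhds
        (Filter.Tendsto.mul_const c (Filter.Tendsto.const_mul (ρ / 2) h1))
    simpa using h2.mono_left nhdsWithin_le_nhds
  · filter_upwards [Ioo_mem_nhdsGT_of_mem (Set.mem_Ico.mpr ⟨le_refl 0, one_pos⟩)]
      with t ht
    exact key t ht.1 (le_of_lt ht.2)
end

section
/- (Inexact oracle) Fix λ_k ∈ ℝᵖ and let x*_k ∈ X minimize L_ρ(·;λ_k) over X. Assume: (i) x̃_k ∈ X satisfies L_ρ(x̃_k;λ_k) − L_ρ(x*_k;λ_k) ≤ ε_in^k with 0 ≤ ε_in^k ≤ B_in; (ii) ε_out^k ∈ ℝᵖ satisfies ‖ε_out^k‖ ≤ B_out; (iii) D_δ ⊆ ℝᵖ contains λ_k and ‖λ₁ − λ₂‖ ≤ B_λ for all λ₁, λ₂ ∈ D_δ; (iv) Φ_ρ is concave and differentiable with ∇Φ_ρ(λ_k) = A x*_k − b, and Φ_ρ(λ) ≥ Φ_ρ(λ_k) + ⟨∇Φ_ρ(λ_k), λ − λ_k⟩ − (1/(2ρ))‖λ − λ_k‖² for all λ ∈ ℝᵖ. Define Φ_{δ,L}(λ_k)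 = L_ρ(x̃_k;λ_k) + B_out·B_λ, s_{δ,L}(λ_k) = A x̃_k − b + ε_out^k, L = 2/ρ, and δ = 2B_in + 2B_out·B_λ. Then for every λ ∈ D_δ: 0 ≥ Φ_ρ(λ) − (Φ_{δ,L}(λ_k) + ⟨s_{δ,L}(λ_k), λ − λ_k⟩) ≥ −(L/2)‖λ − λ_k‖² − δ. -/
/-!
The upper bound is weak duality at the inexact point:
`Φ λ ≤ L(x̃; λ)`, and `L(x̃; ·)` is affine with slope `A x̃ - b`. For the lower bound, the smoothness
inequality at `λ_k` has slope `A x* - b` instead, and the mismatch `A x* - A x̃` is controlled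
by inexactness: `L(·; λ_k)` is `ρ`-strongly convex along `A`, so the quadratic growth of
`L(·; λ_k)` at its minimizer `x*` gives `ρ/2 ‖A x̃ - A x*‖² ≤ ε_in`. Young's inequality then
trades this for one more `1/(2ρ) ‖λ - λ_k‖²`.
-/

open RealInnerProductSpace Set Filter Topology

theorem le_sub_of_isMinOn_of_combo_le {E : Type*} [AddCommGroup E] [Module ℝ E]
    {s : Set E} {φ : E → ℝ} {x₀ y : E} {D : ℝ}
    (hmin : IsMinOn φ s x₀) (hs : Convex ℝ s) (hx₀ : x₀ ∈ s) (hy : y ∈ s)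
    (hcombo : ∀ t ∈ Ioo (0 : ℝ) 1,
      φ ((1 - t) • x₀ + t • y) ≤ (1 - t) * φ x₀ + t * φ y - t * (1 - t) * D) :
    D ≤ φ y - φ x₀ := by
  -- divide the minimality inequality by `t`, then let `t → 0⁺`
  have hbound : ∀ t ∈ Ioo (0 : ℝ) 1, (1 - t) * D ≤ φ y - φ x₀ := by
    rintro t ⟨ht0, ht1⟩
    have hle : φ x₀ ≤ φ ((1 - t) • x₀ + t • y) :=
      isMinOn_iff.mp hmin _ (hs hx₀ hy (by linarith) ht0.le (by ring))
    have := hcombo t ⟨ht0, ht1⟩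
    exact le_of_mul_le_mul_left (by nlinarith) ht0
  have hlim : Tendsto (fun t : ℝ => (1 - t) * D) (𝓝[>] 0) (𝓝 D) := by
    have : Continuous fun t : ℝ => (1 - t) * D := by fun_prop
    simpa using (this.tendsto 0).mono_left nhdsWithin_le_nhds
  exact le_of_tendsto hlim (eventually_of_mem (Ioo_mem_nhdsGT one_pos) hbound)

section InnerProductSpace

variable {F : Type*} [NormedAddCommGroup F] [InnerProductSpace ℝ F]

theorem norm_one_sub_smul_add_smul_sq (u v : F) (t : ℝ) :
    ‖(1 - t) • u + t • v‖ ^ 2 = (1 - t) * ‖u‖ ^ 2 + t * ‖v‖ ^ 2 - t * (1 - t) * ‖u - v‖ ^ 2 := by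
  rw [norm_add_sq_real, norm_sub_sq_real, norm_smul, norm_smul, real_inner_smul_left,
    real_inner_smul_right]
  simp only [Real.norm_eq_abs, mul_pow, sq_abs]
  ring

theorem real_inner_le_young (u v : F) {ρ : ℝ} (hρ : 0 < ρ) :
    ⟪u, v⟫ ≤ ρ / 2 * ‖u‖ ^ 2 + 1 / (2 * ρ) * ‖v‖ ^ 2 := by
  have hexpand : ‖ρ • u - v‖ ^ 2 = ρ ^ 2 * ‖u‖ ^ 2 - 2 * ρ * ⟪u, v⟫ + ‖v‖ ^ 2 := by
    rw [norm_sub_sq_real, norm_smul, real_inner_smul_left, Real.norm_eq_abs, mul_pow, sq_abs]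
    ring
  have hsq : 0 ≤ ρ ^ 2 * ‖u‖ ^ 2 - 2 * ρ * ⟪u, v⟫ + ‖v‖ ^ 2 := hexpand ▸ sq_nonneg _
  have hrhs : ρ / 2 * ‖u‖ ^ 2 + 1 / (2 * ρ) * ‖v‖ ^ 2
      = (ρ ^ 2 * ‖u‖ ^ 2 + ‖v‖ ^ 2) / (2 * ρ) := by
    field_simp
  rw [hrhs, le_div_iff₀ (by positivity)]
  linarith

variable {E : Type*} [AddCommGroup E] [Module ℝ E]

noncomputable def augLagrangian (f : E → ℝ) (A : E →ₗ[ℝ] F) (b : F) (ρ : ℝ) (x : E) (μ : F) : ℝ :=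
  f x + ⟪A x - b, μ⟫ + ρ / 2 * ‖A x - b‖ ^ 2

variable {f : E → ℝ} {A : E →ₗ[ℝ] F} {b : F} {ρ : ℝ}

theorem augLagrangian_eq_add_inner (x : E) (μ ν : F) :
    augLagrangian f A b ρ x μ = augLagrangian f A b ρ x ν + ⟪A x - b, μ - ν⟫ := by
  simp only [augLagrangian, inner_sub_right]
  ring

theorem augLagrangian_combo_le (hf : ConvexOn ℝ univ f) (μ : F) (x y : E) {t : ℝ}
    (ht0 : 0 ≤ t) (ht1 : t ≤ 1) :
    augLagrangian f A b ρ ((1 - t) • x + t • y) μ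
      ≤ (1 - t) * augLagrangian f A b ρ x μ + t * augLagrangian f A b ρ y μ
        - t * (1 - t) * (ρ / 2 * ‖A x - A y‖ ^ 2) := by
  have hres : A ((1 - t) • x + t • y) - b = (1 - t) • (A x - b) + t • (A y - b) := by
    simp only [map_add, map_smul, smul_sub]
    module
  have hf_le : f ((1 - t) • x + t • y) ≤ (1 - t) * f x + t * f y :=
    hf.2 (mem_univ x) (mem_univ y) (by linarith) ht0 (by ring)
  have hdiff : (A x - b) - (A y - b) = A x - A y := by abel
  simp only [augLagrangian, hres, inner_add_left, real_inner_smul_left,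
    norm_one_sub_smul_add_smul_sq, hdiff]
  nlinarith

theorem sq_norm_map_sub_le_of_isMinOn (hf : ConvexOn ℝ univ f) {X : Set E} (hX : Convex ℝ X)
    {μ : F} {x₀ y : E} (hmin : IsMinOn (augLagrangian f A b ρ · μ) X x₀) (hx₀ : x₀ ∈ X)
    (hy : y ∈ X) :
    ρ / 2 * ‖A y - A x₀‖ ^ 2 ≤ augLagrangian f A b ρ y μ - augLagrangian f A b ρ x₀ μ := by
  rw [norm_sub_rev]
  exact le_sub_of_isMinOn_of_combo_le hmin hX hx₀ hy
    fun t ht => augLagrangian_combo_le hf μ x₀ y ht.1.le ht.2.le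

end InnerProductSpace

theorem inexact_oracle_general
    (n p : ℕ)
    (f : EuclideanSpace ℝ (Fin n) → ℝ)
    (hf : ConvexOn ℝ Set.univ f)
    (X : Set (EuclideanSpace ℝ (Fin n)))
    (hXconvex : Convex ℝ X)
    (A : EuclideanSpace ℝ (Fin n) →ₗ[ℝ] EuclideanSpace ℝ (Fin p))
    (b : EuclideanSpace ℝ (Fin p))
    (ρ : ℝ) (hρ : 0 < ρ)
    (Lρ : EuclideanSpace ℝ (Fin n) → EuclideanSpace ℝ (Fin p) → ℝ)
    (hLρ : ∀ x μ, Lρ x μ = f x + ⟪A x - b, μ⟫ + ρ / 2 * ‖A x - b‖ ^ 2)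
    -- the augmented dual function `Φ μ = min_{x ∈ X} Lρ(x; μ)`
    (Φ : EuclideanSpace ℝ (Fin p) → ℝ)
    (hΦ : ∀ μ, ∃ x ∈ X, Lρ x μ = Φ μ ∧ ∀ y ∈ X, Φ μ ≤ Lρ y μ)
    (lamk : EuclideanSpace ℝ (Fin p))
    -- (the exact minimizer `x*_k` of `Lρ(·; λ_k)` over `X`)
    (xk : EuclideanSpace ℝ (Fin n)) (hxk : xk ∈ X)
    (hxkmin : ∀ x ∈ X, Lρ xk lamk ≤ Lρ x lamk)
    -- (i) the inexact primal update `x̃_k`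
    (xt : EuclideanSpace ℝ (Fin n)) (hxt : xt ∈ X)
    (εin Bin : ℝ)
    (hxtapprox : Lρ xt lamk - Lρ xk lamk ≤ εin)
    (hεin_le : εin ≤ Bin)
    -- (ii) the dual error `ε_out^k`
    (εout : EuclideanSpace ℝ (Fin p)) (Bout : ℝ) (hεout : ‖εout‖ ≤ Bout)
    -- (iii) the set `D_δ`
    (Dδ : Set (EuclideanSpace ℝ (Fin p))) (Blam : ℝ)
    (hlamk_mem : lamk ∈ Dδ)
    (hDδ_diam : ∀ l₁ ∈ Dδ, ∀ l₂ ∈ Dδ, ‖l₁ - l₂‖ ≤ Blam)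
    -- (iv) concavity and smoothness of `Φ`
    (hlower : ∀ lam, Φ lam ≥
      Φ lamk + ⟪A xk - b, lam - lamk⟫ - 1 / (2 * ρ) * ‖lam - lamk‖ ^ 2) :
    ∀ lam ∈ Dδ,
      0 ≥ Φ lam -
          ((Lρ xt lamk + Bout * Blam) + ⟪A xt - b + εout, lam - lamk⟫) ∧
      Φ lam - ((Lρ xt lamk + Bout * Blam) + ⟪A xt - b + εout, lam - lamk⟫) ≥
        -(2 / ρ / 2) * ‖lam - lamk‖ ^ 2 - (2 * Bin + 2 * Bout * Blam) := by
  obtain rfl : Lρ = augLagrangian f A b ρ := funext fun x => funext (hLρ x)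
  have hΦlamk : Φ lamk = augLagrangian f A b ρ xk lamk := by
    obtain ⟨x₀, hx₀, hx₀eq, hx₀min⟩ := hΦ lamk
    exact le_antisymm (hx₀min xk hxk) (hx₀eq ▸ hxkmin x₀ hx₀)
  have hgap : ρ / 2 * ‖A xt - A xk‖ ^ 2 ≤ εin :=
    (sq_norm_map_sub_le_of_isMinOn hf hXconvex (isMinOn_iff.mpr hxkmin) hxk hxt).trans hxtapprox
  intro lam hlam
  have hweak : Φ lam ≤ augLagrangian f A b ρ xt lam := (hΦ lam).choose_spec.2.2 xt hxt
  rw [augLagrangian_eq_add_inner xt lam lamk] at hweak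
  have hslope : ⟪A xk - b, lam - lamk⟫ = ⟪A xt - b, lam - lamk⟫ - ⟪A xt - A xk, lam - lamk⟫ := by
    rw [← inner_sub_left, sub_sub_sub_cancel_left]
  have hεout_inner : |⟪εout, lam - lamk⟫| ≤ Bout * Blam :=
    (abs_real_inner_le_norm _ _).trans (mul_le_mul hεout (hDδ_diam lam hlam lamk hlamk_mem)
      (norm_nonneg _) ((norm_nonneg _).trans hεout))
  have hyoung := real_inner_le_young (A xt - A xk) (lam - lamk) hρ
  have hsmooth := hlower lam
  have hcoef : 2 / ρ / 2 * ‖lam - lamk‖ ^ 2 = 2 * (1 / (2 * ρ) * ‖lam - lamk‖ ^ 2) := by ring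
  rw [inner_add_left]
  constructor <;> linarith [abs_le.mp hεout_inner]

/-- the inexact oracle property (Lemma 1). -/
theorem inexact_oracle
    (n p : ℕ)
    (f : EuclideanSpace ℝ (Fin n) → ℝ)
    (hf : ConvexOn ℝ Set.univ f)
    (X : Set (EuclideanSpace ℝ (Fin n)))
    (hXne : X.Nonempty) (hXcompact : IsCompact X) (hXconvex : Convex ℝ X)
    (A : EuclideanSpace ℝ (Fin n) →ₗ[ℝ] EuclideanSpace ℝ (Fin p))
    (b : EuclideanSpace ℝ (Fin p))
    (ρ : ℝ) (hρ : 0 < ρ)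
    (Lρ : EuclideanSpace ℝ (Fin n) → EuclideanSpace ℝ (Fin p) → ℝ)
    (hLρ : ∀ x μ, Lρ x μ = f x + ⟪A x - b, μ⟫ + ρ / 2 * ‖A x - b‖ ^ 2)
    -- the augmented dual function `Φ μ = min_{x ∈ X} Lρ(x; μ)`
    (Φ : EuclideanSpace ℝ (Fin p) → ℝ)
    (hΦ : ∀ μ, ∃ x ∈ X, Lρ x μ = Φ μ ∧ ∀ y ∈ X, Φ μ ≤ Lρ y μ)
    (lamk : EuclideanSpace ℝ (Fin p))
    -- (the exact minimizer `x*_k` of `Lρ(·; λ_k)` over `X`)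
    (xk : EuclideanSpace ℝ (Fin n)) (hxk : xk ∈ X)
    (hxkmin : ∀ x ∈ X, Lρ xk lamk ≤ Lρ x lamk)
    -- (i) the inexact primal update `x̃_k`
    (xt : EuclideanSpace ℝ (Fin n)) (hxt : xt ∈ X)
    (εin Bin : ℝ)
    (hxtapprox : Lρ xt lamk - Lρ xk lamk ≤ εin)
    (hεin_nonneg : 0 ≤ εin) (hεin_le : εin ≤ Bin)
    -- (ii) the dual error `ε_out^k`
    (εout : EuclideanSpace ℝ (Fin p)) (Bout : ℝ) (hεout : ‖εout‖ ≤ Bout)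
    -- (iii) the set `D_δ`
    (Dδ : Set (EuclideanSpace ℝ (Fin p))) (Blam : ℝ)
    (hlamk_mem : lamk ∈ Dδ)
    (hDδ_diam : ∀ l₁ ∈ Dδ, ∀ l₂ ∈ Dδ, ‖l₁ - l₂‖ ≤ Blam)
    -- (iv) concavity and smoothness of `Φ`
    (hconc : ConcaveOn ℝ Set.univ Φ)
    (hgrad : HasGradientAt Φ (A xk - b) lamk)
    (hlower : ∀ lam, Φ lam ≥
      Φ lamk + ⟪A xk - b, lam - lamk⟫ - 1 / (2 * ρ) * ‖lam - lamk‖ ^ 2) :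
    ∀ lam ∈ Dδ,
      0 ≥ Φ lam -
          ((Lρ xt lamk + Bout * Blam) + ⟪A xt - b + εout, lam - lamk⟫) ∧
      Φ lam - ((Lρ xt lamk + Bout * Blam) + ⟪A xt - b + εout, lam - lamk⟫) ≥
        -(2 / ρ / 2) * ‖lam - lamk‖ ^ 2 - (2 * Bin + 2 * Bout * Blam) :=
  inexact_oracle_general n p f hf X hXconvex A b ρ hρ Lρ hLρ Φ hΦ lamk xk hxk hxkmin xt hxt εin Bin
    hxtapprox hεin_le εout Bout hεout Dδ Blam hlamk_mem hDδ_diam hlower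
end

section
/- (Per-step inexact projected gradient ascent inequality) Let Φ : ℝᵖ → ℝ, let D ⊆ ℝᵖ be nonempty, closed and convex, let λ* ∈ D maximize Φ over ℝᵖ, let λ_k ∈ D, and let L > 0, δ ≥ 0. Suppose Φ_δ ∈ ℝ and s ∈ ℝᵖ satisfy the (δ,L)-inexact-oracle inequalities on D: for all λ ∈ D, 0 ≥ Φ(λ) − (Φ_δ + ⟨s, λ − λ_k⟩) ≥ −(L/2)‖λ − λ_k‖² − δ. Define λ_{k+1} = Π_D(λ_k + (1/L)s), the Euclidean projection of λ_k + (1/L)s onto D. Then Φ(λ*) − Φ(λ_{k+1}) ≤ (L/2)(‖λ_k − λ*‖² − ‖λ_{k+1} − λ*‖²) + δ. -/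
open RealInnerProductSpace

set_option maxHeartbeats 1000000 in
/-- per-step inexact projected gradient ascent inequality.
The projection `λ_{k+1} = Π_D(λ_k + (1/L) s)` is expressed by its defining
property: `λ_{k+1} ∈ D` and it minimizes the distance to `λ_k + (1/L) s`
among points of `D`. -/
theorem inexact_projected_gradient_step
    (p : ℕ)
    (Φ : EuclideanSpace ℝ (Fin p) → ℝ)
    (D : Set (EuclideanSpace ℝ (Fin p)))
    (hDne : D.Nonempty) (hDclosed : IsClosed D) (hDconvex : Convex ℝ D)
    (lamstar : EuclideanSpace ℝ (Fin p))
    (hlamstar_mem : lamstar ∈ D)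
    (hlamstar_max : ∀ lam, Φ lam ≤ Φ lamstar)
    (lamk : EuclideanSpace ℝ (Fin p)) (hlamk : lamk ∈ D)
    (L δ : ℝ) (hL : 0 < L) (hδ : 0 ≤ δ)
    (Φδ : ℝ) (s : EuclideanSpace ℝ (Fin p))
    (horacle : ∀ lam ∈ D,
      0 ≥ Φ lam - (Φδ + ⟪s, lam - lamk⟫) ∧
      Φ lam - (Φδ + ⟪s, lam - lamk⟫) ≥ -(L / 2) * ‖lam - lamk‖ ^ 2 - δ)
    (lamk1 : EuclideanSpace ℝ (Fin p))
    (hproj_mem : lamk1 ∈ D)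
    (hproj_min : ∀ y ∈ D,
      dist (lamk + (1 / L) • s) lamk1 ≤ dist (lamk + (1 / L) • s) y) :
    Φ lamstar - Φ lamk1 ≤
      L / 2 * (‖lamk - lamstar‖ ^ 2 - ‖lamk1 - lamstar‖ ^ 2) + δ := by

  haveI : Nonempty ↑D := hDne.to_subtype
  set v := lamk + (1 / L) • s with hv
  -- projection variational inequality
  have hbdd : BddBelow (Set.range fun w : D => ‖v - (w : EuclideanSpace ℝ (Fin p))‖) :=
    ⟨0, by rintro x ⟨w, rfl⟩; exact norm_nonneg _⟩
  have hinf : ‖v - lamk1‖ = ⨅ w : D, ‖v - w‖ := by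
    refine le_antisymm (le_ciInf fun w => ?_)
      (ciInf_le hbdd (⟨lamk1, hproj_mem⟩ : D))
    simpa [dist_eq_norm] using hproj_min w w.2
  have hVI : ∀ w ∈ D, ⟪v - lamk1, w - lamk1⟫ ≤ 0 :=
    (norm_eq_iInf_iff_real_inner_le_zero hDconvex hproj_mem).mp hinf
  have hVIstar := hVI lamstar hlamstar_mem
  -- oracle inequalities
  have h1 := (horacle lamstar hlamstar_mem).1
  have h2 := (horacle lamk1 hproj_mem).2
  -- expand inner products
  have hvexp : v - lamk1 = (lamk - lamk1) + (1 / L) • s := by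
    rw [hv]; abel
  rw [hvexp, inner_add_left, real_inner_smul_left] at hVIstar
  have hs : ⟪s, lamstar - lamk1⟫ ≤ L * ⟪lamk1 - lamk, lamstar - lamk1⟫ := by
    have h3 : ⟪lamk - lamk1, lamstar - lamk1⟫ = - ⟪lamk1 - lamk, lamstar - lamk1⟫ := by
      rw [← inner_neg_left]; congr 1; abel
    rw [h3, one_div_mul_eq_div] at hVIstar
    have h5 : ⟪s, lamstar - lamk1⟫ / L ≤ ⟪lamk1 - lamk, lamstar - lamk1⟫ := by
      linarith
    rw [mul_comm]
    exact (div_le_iff₀ hL).mp h5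
  -- norm identity
  have hid : ‖lamk - lamstar‖ ^ 2
      = ‖lamk1 - lamk‖ ^ 2 + ‖lamk1 - lamstar‖ ^ 2
        + 2 * ⟪lamk1 - lamk, lamstar - lamk1⟫ := by
    have : lamk - lamstar = -((lamk1 - lamk) + (lamstar - lamk1)) := by abel
    rw [this, norm_neg, ← real_inner_self_eq_norm_sq, inner_add_add_self,
      real_inner_self_eq_norm_sq, real_inner_self_eq_norm_sq,
      real_inner_comm (lamstar - lamk1), norm_sub_rev lamstar]
    ring
  have hsplit : ⟪s, lamstar - lamk⟫ = ⟪s, lamstar - lamk1⟫ + ⟪s, lamk1 - lamk⟫ := by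
    rw [← inner_add_right]; congr 1; abel
  nlinarith [h1, h2, hs, hid, hsplit]
end

section
/- Let λ_k ∈ ℝᵖ, let x*_k ∈ X minimize L_ρ(·;λ_k) over X, let x* ∈ X satisfy Ax* = b, and let x̃_k ∈ X satisfy L_ρ(x̃_k;λ_k) − L_ρ(x*_k;λ_k) ≤ ε_in^k. Then for every λ ∈ ℝᵖ: f(x̃_k) − f(x*) + ⟨λ, r(x̃_k)⟩ ≤ ⟨λ − λ_k, r(x̃_k)⟩ − (ρ/2)‖r(x̃_k)‖² + ε_in^k. -/
open RealInnerProductSpace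

/-- basic inequality for the inexact primal update. -/
theorem inexact_primal_update_inequality
    (n p : ℕ)
    (f : EuclideanSpace ℝ (Fin n) → ℝ)
    (hf : ConvexOn ℝ Set.univ f)
    (X : Set (EuclideanSpace ℝ (Fin n)))
    (hXne : X.Nonempty) (hXcompact : IsCompact X) (hXconvex : Convex ℝ X)
    (A : EuclideanSpace ℝ (Fin n) →ₗ[ℝ] EuclideanSpace ℝ (Fin p))
    (b : EuclideanSpace ℝ (Fin p))
    (ρ : ℝ) (hρ : 0 < ρ)
    (Lρ : EuclideanSpace ℝ (Fin n) → EuclideanSpace ℝ (Fin p) → ℝ)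
    (hLρ : ∀ x μ, Lρ x μ = f x + ⟪A x - b, μ⟫ + ρ / 2 * ‖A x - b‖ ^ 2)
    (lamk : EuclideanSpace ℝ (Fin p))
    (xk : EuclideanSpace ℝ (Fin n)) (hxk : xk ∈ X)
    (hxkmin : ∀ x ∈ X, Lρ xk lamk ≤ Lρ x lamk)
    (xstar : EuclideanSpace ℝ (Fin n)) (hxstar : xstar ∈ X)
    (hfeas : A xstar = b)
    (xt : EuclideanSpace ℝ (Fin n)) (hxt : xt ∈ X)
    (εin : ℝ)
    (hxtapprox : Lρ xt lamk - Lρ xk lamk ≤ εin) :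
    ∀ lam : EuclideanSpace ℝ (Fin p),
      f xt - f xstar + ⟪lam, A xt - b⟫ ≤
        ⟪lam - lamk, A xt - b⟫ - ρ / 2 * ‖A xt - b‖ ^ 2 + εin := by
  intro lam
  have h1 : Lρ xt lamk ≤ Lρ xstar lamk + εin := by
    have := hxkmin xstar hxstar; linarith
  have h2 : Lρ xstar lamk = f xstar := by
    rw [hLρ, hfeas]; simp
  rw [hLρ, h2] at h1
  have hsym : ⟪A xt - b, lamk⟫ = ⟪lamk, A xt - b⟫ := real_inner_comm _ _
  rw [inner_sub_left]
  linarith [hsym ▸ h1]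
end

section
/- (Projection step inequality) Let D ⊆ ℝᵖ be nonempty, closed and convex, let λ, λ_k ∈ D, let L > 0, and let v, ε ∈ ℝᵖ with ‖ε‖ ≤ B_out and ‖λ − λ_k‖ ≤ B_λ. Define λ_{k+1} = Π_D(λ_k + (1/L)(v + ε)). Then ⟨v, λ − λ_k⟩ ≤ (L/2)(‖λ_k − λ‖² − ‖λ_{k+1} − λ‖²) + B_out·B_λ + (1/(2L))‖v‖² + (1/L)⟨v, ε⟩ + (1/(2L))B_out². -/
/-!
For a projected step `x' = Π_K (x + (1/L) • g)` and `y ∈ K`, the variational inequality of the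
projection bounds `⟪g, y - x'⟫` by `L ⟪x' - x, y - x'⟫`, which the three-point identity turns into
`L/2 (‖x - y‖² - ‖x' - y‖² - ‖x' - x‖²)`; Young's inequality on `⟪g, x' - x⟫` absorbs the last
term, giving `⟪g, y - x⟫ ≤ L/2 (‖x - y‖² - ‖x' - y‖²) + ‖g‖²/(2L)`. With `g = v + ε`, expanding
`‖v + ε‖²` and bounding `-⟪ε, λ - λ_k⟫` by Cauchy–Schwarz gives the claim.
-/

open RealInnerProductSpace

section

variable {F : Type*} [NormedAddCommGroup F] [InnerProductSpace ℝ F]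

theorem real_inner_sub_le_zero_of_forall_dist_le {K : Set F} (hK : Convex ℝ K) {x u y : F}
    (hu : u ∈ K) (hmin : ∀ z ∈ K, dist x u ≤ dist x z) (hy : y ∈ K) :
    ⟪x - u, y - u⟫ ≤ 0 := by
  have : Nonempty K := ⟨⟨u, hu⟩⟩
  refine (norm_eq_iInf_iff_real_inner_le_zero hK hu).mp (le_antisymm ?_ ?_) y hy
  · exact le_ciInf fun z => by simpa only [dist_eq_norm] using hmin z z.2
  · refine ciInf_le ?_ (⟨u, hu⟩ : K)
    exact ⟨0, by rintro _ ⟨z, rfl⟩; positivity⟩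

theorem two_mul_real_inner_sub_sub_eq (a b c : F) :
    2 * ⟪a - b, c - a⟫ = ‖b - c‖ ^ 2 - ‖a - c‖ ^ 2 - ‖a - b‖ ^ 2 := by
  have h := norm_sub_sq_real (a - c) (a - b)
  rw [sub_sub_sub_cancel_left] at h
  rw [← neg_sub a c, inner_neg_right, real_inner_comm]
  linarith

theorem real_inner_le_half_mul_norm_sq_add {L : ℝ} (hL : 0 < L) (u w : F) :
    ⟪u, w⟫ ≤ L / 2 * ‖w‖ ^ 2 + 1 / (2 * L) * ‖u‖ ^ 2 := by
  refine (real_inner_le_norm u w).trans ?_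
  rw [div_mul_eq_mul_div, one_div_mul_eq_div, div_add_div _ _ two_ne_zero (by positivity),
    le_div_iff₀ (by positivity)]
  nlinarith [sq_nonneg (L * ‖w‖ - ‖u‖)]

theorem real_inner_le_of_projected_step {K : Set F} (hK : Convex ℝ K) {L : ℝ} (hL : 0 < L)
    {g x x' y : F} (hx' : x' ∈ K)
    (hmin : ∀ z ∈ K, dist (x + (1 / L) • g) x' ≤ dist (x + (1 / L) • g) z) (hy : y ∈ K) :
    ⟪g, y - x⟫ ≤ L / 2 * (‖x - y‖ ^ 2 - ‖x' - y‖ ^ 2) + 1 / (2 * L) * ‖g‖ ^ 2 := by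
  have hvi : ⟪g, y - x'⟫ ≤ L * ⟪x' - x, y - x'⟫ := by
    have h := real_inner_sub_le_zero_of_forall_dist_le hK hx' hmin hy
    rw [show x + (1 / L) • g - x' = (1 / L) • g - (x' - x) by abel, inner_sub_left,
      real_inner_smul_left, sub_nonpos, one_div, inv_mul_le_iff₀ hL] at h
    exact h
  have hthree : L * ⟪x' - x, y - x'⟫ = L / 2 * (‖x - y‖ ^ 2 - ‖x' - y‖ ^ 2 - ‖x' - x‖ ^ 2) := by
    rw [← two_mul_real_inner_sub_sub_eq]; ring
  have hyoung := real_inner_le_half_mul_norm_sq_add hL g (x' - x)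
  have hsplit : ⟪g, y - x⟫ = ⟪g, y - x'⟫ + ⟪g, x' - x⟫ := by
    rw [← inner_add_right, sub_add_sub_cancel]
  linarith

end

theorem projection_step_inequality_general
    (p : ℕ)
    (D : Set (EuclideanSpace ℝ (Fin p)))
    (hDconvex : Convex ℝ D)
    (lam lamk : EuclideanSpace ℝ (Fin p))
    (hlam : lam ∈ D)
    (L : ℝ) (hL : 0 < L)
    (v ε : EuclideanSpace ℝ (Fin p))
    (Bout Blam : ℝ)
    (hε : ‖ε‖ ≤ Bout)
    (hdiam : ‖lam - lamk‖ ≤ Blam)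
    (lamk1 : EuclideanSpace ℝ (Fin p))
    (hproj_mem : lamk1 ∈ D)
    (hproj_min : ∀ y ∈ D,
      dist (lamk + (1 / L) • (v + ε)) lamk1 ≤ dist (lamk + (1 / L) • (v + ε)) y) :
    ⟪v, lam - lamk⟫ ≤
      L / 2 * (‖lamk - lam‖ ^ 2 - ‖lamk1 - lam‖ ^ 2) + Bout * Blam +
        1 / (2 * L) * ‖v‖ ^ 2 + 1 / L * ⟪v, ε⟫ + 1 / (2 * L) * Bout ^ 2 := by
  have hstep := real_inner_le_of_projected_step hDconvex hL hproj_mem hproj_min hlam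
  have hsplit : ⟪v, lam - lamk⟫ = ⟪v + ε, lam - lamk⟫ - ⟪ε, lam - lamk⟫ := by
    rw [inner_add_left, add_sub_cancel_right]
  have hnorm : 1 / (2 * L) * ‖v + ε‖ ^ 2 =
      1 / (2 * L) * ‖v‖ ^ 2 + 1 / L * ⟪v, ε⟫ + 1 / (2 * L) * ‖ε‖ ^ 2 := by
    rw [norm_add_sq_real]; ring
  have hcross : -⟪ε, lam - lamk⟫ ≤ Bout * Blam :=
    calc -⟪ε, lam - lamk⟫ ≤ ‖ε‖ * ‖lam - lamk‖ := (neg_le_abs _).trans (abs_real_inner_le_norm _ _)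
      _ ≤ Bout * Blam := mul_le_mul hε hdiam (norm_nonneg _) ((norm_nonneg _).trans hε)
  have hεsq : 1 / (2 * L) * ‖ε‖ ^ 2 ≤ 1 / (2 * L) * Bout ^ 2 := by
    gcongr
  linarith

/-- projection step inequality.  The projection
`λ_{k+1} = Π_D(λ_k + (1/L)(v + ε))` is expressed by its defining property:
membership in `D` together with minimality of the distance. -/
theorem projection_step_inequality
    (p : ℕ)
    (D : Set (EuclideanSpace ℝ (Fin p)))
    (hDne : D.Nonempty) (hDclosed : IsClosed D) (hDconvex : Convex ℝ D)
    (lam lamk : EuclideanSpace ℝ (Fin p))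
    (hlam : lam ∈ D) (hlamk : lamk ∈ D)
    (L : ℝ) (hL : 0 < L)
    (v ε : EuclideanSpace ℝ (Fin p))
    (Bout Blam : ℝ)
    (hε : ‖ε‖ ≤ Bout)
    (hdiam : ‖lam - lamk‖ ≤ Blam)
    (lamk1 : EuclideanSpace ℝ (Fin p))
    (hproj_mem : lamk1 ∈ D)
    (hproj_min : ∀ y ∈ D,
      dist (lamk + (1 / L) • (v + ε)) lamk1 ≤ dist (lamk + (1 / L) • (v + ε)) y) :
    ⟪v, lam - lamk⟫ ≤
      L / 2 * (‖lamk - lam‖ ^ 2 - ‖lamk1 - lam‖ ^ 2) + Bout * Blam +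
        1 / (2 * L) * ‖v‖ ^ 2 + 1 / L * ⟪v, ε⟫ + 1 / (2 * L) * Bout ^ 2 :=
  projection_step_inequality_general p D hDconvex lam lamk hlam L hL v ε Bout Blam hε hdiam lamk1
    hproj_mem hproj_min
end

section
/- (Lemma 2, intermediate lemma) Fix k ≥ 1, set L = 2/ρ and δ = 2B_in + 2B_out·B_λ. Assume: (i) x* ∈ X satisfies Ax* = b, λ* ∈ ℝᵖ maximizes Φ_ρ over ℝᵖ, and (x*, λ*) is a saddle point of the Lagrangian L(x;λ) = f(x) + ⟨Ax − b, λ⟩, i.e. L(x*;λ) ≤ L(x*;λ*) ≤ L(x;λ*) for all x ∈ X and λ ∈ ℝᵖ; (ii) D ⊆ ℝᵖ is a nonempty compact convex set with λ* ∈ D, and D_δ ⊇ D is a set with ‖λ₁ − λ₂‖ ≤ B_λ for all λ₁, λ₂ ∈ D_δ such that λ + ε_out^j ∈ D_δ whenever λ ∈ D and j ∈ {k−1, k}; (iii) for j ∈ {k−1, k}: λ_j ∈ D, x̃_j ∈ X satisfies L_ρ(x̃_j;λ_j) − min_{x∈X} L_ρ(x;λ_j) ≤ ε_in^j with 0 ≤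 ε_in^j ≤ B_in, ‖ε_out^j‖ ≤ B_out, and λ_{j+1} = Π_D(λ_j + (1/L)(r(x̃_j) + ε_out^j)); (iv) for j ∈ {k−1, k}, setting Φ_{δ,L}(λ_j) = L_ρ(x̃_j;λ_j) + B_out·B_λ and s_{δ,L}(λ_j) = r(x̃_j) + ε_out^j, the inexact-oracle inequalities hold: for all λ ∈ D_δ, 0 ≥ Φ_ρ(λ) − (Φ_{δ,L}(λ_j) + ⟨s_{δ,L}(λ_j), λ − λ_j⟩) ≥ −(L/2)‖λ − λ_j‖² − δ. Define φ^k(λ) = (L/2)‖λ_k − λ‖² + (1/2)‖λ_{k−1} − λ*‖², φ^{k+1}(λ) = (L/2)‖λ_{k+1} − λ‖² + (1/2)‖λ_k − λ*‖², and E = (1 + 4/L)·B_λ·B_out + (1 + 4/L)·B_in + (1/2 + 1/(2L))·B_out². Then for every λ ∈ D: f(x̃_k) − f(x*) + ⟨λ, r(x̃_k)⟩ ≤ φ^k(λ) − φ^{k+1}(λ) + E. -/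
/-!
The argument tracks two projected inexact dual-gradient steps. At step `k - 1`, the oracle's upper
bound at `λ*`, its lower bound at `λ_k` and the maximality of `Φ_ρ(λ*)` combine with the
variational inequality of the projection (tested at `λ*`) to show that `‖λ_k - λ*‖²` grows by at
most `2δ/L`. At step `k`, the inexactness of `x̃_k` and `Φ_ρ(λ_k) ≤ L_ρ(x*; λ_k) = f(x*)` turn the
left-hand side into `ε_in + ⟪r(x̃_k), λ - λ_k⟫ - (ρ/2)‖r(x̃_k)‖²`; the projection inequality tested
at `λ` telescopes `‖λ_k - λ‖²` against `‖λ_{k+1} - λ‖²`, and Young's inequality with `ρ = 2/L`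
absorbs the remaining `⟪r(x̃_k), λ_{k+1} - λ_k⟫` into the augmentation term.
-/

open RealInnerProductSpace

section InexactDualStep

variable {E : Type*} [NormedAddCommGroup E] [InnerProductSpace ℝ E]

theorem real_inner_le_zero_of_forall_dist_le {D : Set E} (hD : Convex ℝ D) {z q : E}
    (hq : q ∈ D) (hmin : ∀ y ∈ D, dist z q ≤ dist z y) : ∀ y ∈ D, ⟪z - q, y - q⟫ ≤ 0 := by
  have : Nonempty D := ⟨⟨q, hq⟩⟩
  refine (norm_eq_iInf_iff_real_inner_le_zero hD hq).1 (le_antisymm ?_ ?_)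
  · exact le_ciInf fun w : D => by simpa [dist_eq_norm] using hmin w w.2
  · exact ciInf_le (f := fun w : D => ‖z - w‖) ⟨0, by rintro _ ⟨w, rfl⟩; positivity⟩ ⟨q, hq⟩

theorem two_mul_real_inner_sub_sub (a q y : E) :
    2 * ⟪q - a, y - q⟫ = ‖y - a‖ ^ 2 - ‖y - q‖ ^ 2 - ‖q - a‖ ^ 2 := by
  rw [show y - a = (y - q) + (q - a) by abel, norm_add_sq_real, real_inner_comm]
  ring

theorem real_inner_le_norm_sq_div_add {L : ℝ} (hL : 0 < L) (u v : E) :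
    ⟪u, v⟫ ≤ ‖u‖ ^ 2 / L + L / 4 * ‖v‖ ^ 2 := by
  have h : 0 ≤ L / 4 * ‖(2 / L) • u - v‖ ^ 2 := by positivity
  rw [norm_sub_sq_real, real_inner_smul_left, norm_smul, Real.norm_of_nonneg (by positivity)] at h
  field_simp at h ⊢
  linarith

def IsProjectedStep (D : Set E) (L : ℝ) (a s q : E) : Prop :=
  q ∈ D ∧ ∀ y ∈ D, dist (a + (1 / L) • s) q ≤ dist (a + (1 / L) • s) y

theorem IsProjectedStep.real_inner_le {D : Set E} {L : ℝ} {a s q : E}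
    (hstep : IsProjectedStep D L a s q) (hD : Convex ℝ D) (hL : 0 < L) {y : E} (hy : y ∈ D) :
    ⟪s, y - q⟫ ≤ L / 2 * (‖y - a‖ ^ 2 - ‖y - q‖ ^ 2 - ‖q - a‖ ^ 2) := by
  have hvi := real_inner_le_zero_of_forall_dist_le hD hstep.1 hstep.2 y hy
  rw [show a + (1 / L) • s - q = (1 / L) • s - (q - a) by abel, inner_sub_left,
    real_inner_smul_left, sub_nonpos] at hvi
  rw [← two_mul_real_inner_sub_sub, ← mul_assoc, div_mul_cancel₀ L two_ne_zero]
  calc ⟪s, y - q⟫ = L * (1 / L * ⟪s, y - q⟫) := by field_simp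
    _ ≤ L * ⟪q - a, y - q⟫ := by gcongr

theorem IsProjectedStep.real_inner_sub_le {D : Set E} {L : ℝ} {a r ε q : E}
    (hstep : IsProjectedStep D L a (r + ε) q) (hD : Convex ℝ D) (hL : 0 < L) {l : E}
    (hl : l ∈ D) :
    ⟪r, l - a⟫ ≤ ‖r‖ ^ 2 / L + L / 2 * (‖a - l‖ ^ 2 - ‖q - l‖ ^ 2) + ⟪ε, q - l⟫ := by
  have hvi := hstep.real_inner_le hD hL hl
  have hyoung := real_inner_le_norm_sq_div_add hL r (q - a)
  have hsplit : ⟪r, l - a⟫ = ⟪r + ε, l - q⟫ + ⟪r, q - a⟫ + ⟪ε, q - l⟫ := by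
    simp only [inner_add_left, inner_sub_right]
    ring
  rw [norm_sub_rev a l, norm_sub_rev q l]
  nlinarith [sq_nonneg ‖q - a‖]

/-- `(c, s)` is a `(δ, L)`-oracle answer at `a` for the concave function `Φ` on `S`, in the sense
of Devolder, Glineur and Nesterov. -/
def IsInexactOracle (Φ : E → ℝ) (S : Set E) (L δ : ℝ) (a : E) (c : ℝ) (s : E) : Prop :=
  ∀ l ∈ S, 0 ≥ Φ l - (c + ⟪s, l - a⟫) ∧ Φ l - (c + ⟪s, l - a⟫) ≥ -(L / 2) * ‖l - a‖ ^ 2 - δ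

theorem IsInexactOracle.norm_sub_sq_le {Φ : E → ℝ} {D S : Set E} {L δ c : ℝ} {a s q : E}
    (horacle : IsInexactOracle Φ S L δ a c s) (hstep : IsProjectedStep D L a s q)
    (hD : Convex ℝ D) (hDS : D ⊆ S) (hL : 0 < L) {lstar : E} (hstar : lstar ∈ D)
    (hmax : Φ q ≤ Φ lstar) :
    ‖q - lstar‖ ^ 2 ≤ ‖a - lstar‖ ^ 2 + 2 * δ / L := by
  have hupper := (horacle lstar (hDS hstar)).1
  have hlower := (horacle q (hDS hstep.1)).2
  have hvi := hstep.real_inner_le hD hL hstar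
  have hsplit : ⟪s, lstar - a⟫ = ⟪s, lstar - q⟫ + ⟪s, q - a⟫ := by
    rw [← inner_add_right, sub_add_sub_cancel]
  have hdecrease : L / 2 * (‖lstar - q‖ ^ 2 - ‖lstar - a‖ ^ 2) ≤ δ := by linarith
  rw [norm_sub_rev q, norm_sub_rev a, ← sub_le_iff_le_add', le_div_iff₀ hL]
  linarith

end InexactDualStep

theorem intermediate_lemma_general
    (n p : ℕ)
    (f : EuclideanSpace ℝ (Fin n) → ℝ)
    (X : Set (EuclideanSpace ℝ (Fin n)))
    (A : EuclideanSpace ℝ (Fin n) →ₗ[ℝ] EuclideanSpace ℝ (Fin p))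
    (b : EuclideanSpace ℝ (Fin p))
    (ρ : ℝ) (hρ : 0 < ρ)
    (Lρ : EuclideanSpace ℝ (Fin n) → EuclideanSpace ℝ (Fin p) → ℝ)
    (hLρ : ∀ x μ, Lρ x μ = f x + ⟪A x - b, μ⟫ + ρ / 2 * ‖A x - b‖ ^ 2)
    (Φ : EuclideanSpace ℝ (Fin p) → ℝ)
    (hΦ : ∀ μ, ∃ x ∈ X, Lρ x μ = Φ μ ∧ ∀ y ∈ X, Φ μ ≤ Lρ y μ)
    (k : ℕ) (hk : 1 ≤ k)
    (Bin Bout Blam : ℝ)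
    (L : ℝ) (hLdef : L = 2 / ρ)
    (δ : ℝ) (hδdef : δ = 2 * Bin + 2 * Bout * Blam)
    -- (i) primal/dual optimal pair forming a saddle point of the Lagrangian
    (xstar : EuclideanSpace ℝ (Fin n)) (hxstarX : xstar ∈ X)
    (hxstar_feas : A xstar = b)
    (lamstar : EuclideanSpace ℝ (Fin p))
    (hlamstar_max : ∀ lam, Φ lam ≤ Φ lamstar)
    -- (ii) the sets `D` and `D_δ`
    (D Dδ : Set (EuclideanSpace ℝ (Fin p)))
    (hDconvex : Convex ℝ D)
    (hlamstarD : lamstar ∈ D)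
    (hDsub : D ⊆ Dδ)
    (hDδ_diam : ∀ l₁ ∈ Dδ, ∀ l₂ ∈ Dδ, ‖l₁ - l₂‖ ≤ Blam)
    -- the iterates and errors
    (lam : ℕ → EuclideanSpace ℝ (Fin p))
    (xt : ℕ → EuclideanSpace ℝ (Fin n))
    (εin : ℕ → ℝ)
    (εout : ℕ → EuclideanSpace ℝ (Fin p))
    -- (iii) algorithmic hypotheses for `j ∈ {k−1, k}`
    (hxt_approx : ∀ j, (j = k - 1 ∨ j = k) →
      Lρ (xt j) (lam j) - Φ (lam j) ≤ εin j)
    (hεin : ∀ j, (j = k - 1 ∨ j = k) → 0 ≤ εin j ∧ εin j ≤ Bin)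
    (hεout : ∀ j, (j = k - 1 ∨ j = k) → ‖εout j‖ ≤ Bout)
    (hproj_mem : ∀ j, (j = k - 1 ∨ j = k) → lam (j + 1) ∈ D)
    (hproj_min : ∀ j, (j = k - 1 ∨ j = k) → ∀ y ∈ D,
      dist (lam j + (1 / L) • (A (xt j) - b + εout j)) (lam (j + 1)) ≤
        dist (lam j + (1 / L) • (A (xt j) - b + εout j)) y)
    -- (iv) inexact-oracle inequalities for `j ∈ {k−1, k}`
    (horacle : ∀ j, (j = k - 1 ∨ j = k) → ∀ l ∈ Dδ,
      0 ≥ Φ l - ((Lρ (xt j) (lam j) + Bout * Blam) +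
            ⟪A (xt j) - b + εout j, l - lam j⟫) ∧
      Φ l - ((Lρ (xt j) (lam j) + Bout * Blam) +
            ⟪A (xt j) - b + εout j, l - lam j⟫) ≥
        -(L / 2) * ‖l - lam j‖ ^ 2 - δ)
    -- the constant `E`
    (Econst : ℝ)
    (hEdef : Econst = (1 + 4 / L) * Blam * Bout + (1 + 4 / L) * Bin +
      (1 / 2 + 1 / (2 * L)) * Bout ^ 2) :
    ∀ l ∈ D,
      f (xt k) - f xstar + ⟪l, A (xt k) - b⟫ ≤
        (L / 2 * ‖lam k - l‖ ^ 2 + 1 / 2 * ‖lam (k - 1) - lamstar‖ ^ 2) -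
          (L / 2 * ‖lam (k + 1) - l‖ ^ 2 + 1 / 2 * ‖lam k - lamstar‖ ^ 2) +
          Econst := by
  intro l hl
  have hL : 0 < L := hLdef ▸ div_pos two_pos hρ
  have hdual : ‖lam k - lamstar‖ ^ 2 ≤ ‖lam (k - 1) - lamstar‖ ^ 2 + 2 * δ / L := by
    have hstep := And.intro (hproj_mem (k - 1) (.inl rfl)) (hproj_min (k - 1) (.inl rfl))
    rw [Nat.sub_add_cancel hk] at hstep
    exact IsInexactOracle.norm_sub_sq_le (horacle (k - 1) (.inl rfl)) hstep hDconvex hDsub hL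
      hlamstarD (hlamstar_max _)
  have hprimal := IsProjectedStep.real_inner_sub_le
    ⟨hproj_mem k (.inr rfl), hproj_min k (.inr rfl)⟩ hDconvex hL hl
  have hΦk : Φ (lam k) ≤ f xstar := by
    obtain ⟨-, -, -, hle⟩ := hΦ (lam k)
    simpa [hLρ, hxstar_feas] using hle xstar hxstarX
  have hLρk : Lρ (xt k) (lam k) = f (xt k) + ⟪A (xt k) - b, lam k⟫ + ‖A (xt k) - b‖ ^ 2 / L := by
    rw [hLρ, hLdef]
    field_simp
  have hBout := hεout k (.inr rfl)
  have hdiam := hDδ_diam _ (hDsub (hproj_mem k (.inr rfl))) _ (hDsub hl)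
  have herr : ⟪εout k, lam (k + 1) - l⟫ ≤ Bout * Blam :=
    (real_inner_le_norm _ _).trans
      (mul_le_mul hBout hdiam (norm_nonneg _) ((norm_nonneg _).trans hBout))
  obtain ⟨hεin0, hεinBin⟩ := hεin k (.inr rfl)
  have hbudget : Bin + Bout * Blam + δ / L ≤ Econst := by
    have hBin0 := hεin0.trans hεinBin
    have hBout0 := (norm_nonneg _).trans hBout
    have hBlam0 := (norm_nonneg _).trans hdiam
    have : 0 ≤ δ / L + Bout ^ 2 / 2 + Bout ^ 2 / (2 * L) := by rw [hδdef]; positivity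
    have hE : Econst = Bin + Bout * Blam + 2 * (δ / L) + Bout ^ 2 / 2 + Bout ^ 2 / (2 * L) := by
      rw [hEdef, hδdef]; ring
    linarith
  have hsplit : ⟪l, A (xt k) - b⟫ = ⟪A (xt k) - b, l - lam k⟫ + ⟪A (xt k) - b, lam k⟫ := by
    rw [← inner_add_right, sub_add_cancel, real_inner_comm]
  linear_combination hsplit - hLρk + hxt_approx k (.inr rfl) + hΦk + hprimal + herr + hεinBin +
    hbudget + hdual / 2

/-- Lemma 2: intermediate per-iteration estimate.
Here `Φ` is the augmented dual function `Φ_ρ(λ) = min_{x∈X} L_ρ(x;λ)`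
(characterized by attainment of the minimum over `X`), the projection
`λ_{j+1} = Π_D(λ_j + (1/L)(r(x̃_j) + ε_out^j))` is expressed by membership in
`D` and minimality of the distance, and the hypotheses for `j ∈ {k−1, k}` are
quantified over `j` with `j = k − 1 ∨ j = k`. -/
theorem intermediate_lemma
    (n p : ℕ)
    (f : EuclideanSpace ℝ (Fin n) → ℝ)
    (hf : ConvexOn ℝ Set.univ f)
    (X : Set (EuclideanSpace ℝ (Fin n)))
    (hXne : X.Nonempty) (hXcompact : IsCompact X) (hXconvex : Convex ℝ X)
    (A : EuclideanSpace ℝ (Fin n) →ₗ[ℝ] EuclideanSpace ℝ (Fin p))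
    (b : EuclideanSpace ℝ (Fin p))
    (ρ : ℝ) (hρ : 0 < ρ)
    (Lρ : EuclideanSpace ℝ (Fin n) → EuclideanSpace ℝ (Fin p) → ℝ)
    (hLρ : ∀ x μ, Lρ x μ = f x + ⟪A x - b, μ⟫ + ρ / 2 * ‖A x - b‖ ^ 2)
    (Φ : EuclideanSpace ℝ (Fin p) → ℝ)
    (hΦ : ∀ μ, ∃ x ∈ X, Lρ x μ = Φ μ ∧ ∀ y ∈ X, Φ μ ≤ Lρ y μ)
    (k : ℕ) (hk : 1 ≤ k)
    (Bin Bout Blam : ℝ)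
    (L : ℝ) (hLdef : L = 2 / ρ)
    (δ : ℝ) (hδdef : δ = 2 * Bin + 2 * Bout * Blam)
    -- (i) primal/dual optimal pair forming a saddle point of the Lagrangian
    (xstar : EuclideanSpace ℝ (Fin n)) (hxstarX : xstar ∈ X)
    (hxstar_feas : A xstar = b)
    (lamstar : EuclideanSpace ℝ (Fin p))
    (hlamstar_max : ∀ lam, Φ lam ≤ Φ lamstar)
    (hsaddle_left : ∀ lam : EuclideanSpace ℝ (Fin p),
      f xstar + ⟪A xstar - b, lam⟫ ≤ f xstar + ⟪A xstar - b, lamstar⟫)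
    (hsaddle_right : ∀ x ∈ X,
      f xstar + ⟪A xstar - b, lamstar⟫ ≤ f x + ⟪A x - b, lamstar⟫)
    -- (ii) the sets `D` and `D_δ`
    (D Dδ : Set (EuclideanSpace ℝ (Fin p)))
    (hDne : D.Nonempty) (hDcompact : IsCompact D) (hDconvex : Convex ℝ D)
    (hlamstarD : lamstar ∈ D)
    (hDsub : D ⊆ Dδ)
    (hDδ_diam : ∀ l₁ ∈ Dδ, ∀ l₂ ∈ Dδ, ‖l₁ - l₂‖ ≤ Blam)
    -- the iterates and errors
    (lam : ℕ → EuclideanSpace ℝ (Fin p))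
    (xt : ℕ → EuclideanSpace ℝ (Fin n))
    (εin : ℕ → ℝ)
    (εout : ℕ → EuclideanSpace ℝ (Fin p))
    (hDδ_shift : ∀ j, (j = k - 1 ∨ j = k) → ∀ l ∈ D, l + εout j ∈ Dδ)
    -- (iii) algorithmic hypotheses for `j ∈ {k−1, k}`
    (hlam_mem : ∀ j, (j = k - 1 ∨ j = k) → lam j ∈ D)
    (hxt_mem : ∀ j, (j = k - 1 ∨ j = k) → xt j ∈ X)
    (hxt_approx : ∀ j, (j = k - 1 ∨ j = k) →
      Lρ (xt j) (lam j) - Φ (lam j) ≤ εin j)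
    (hεin : ∀ j, (j = k - 1 ∨ j = k) → 0 ≤ εin j ∧ εin j ≤ Bin)
    (hεout : ∀ j, (j = k - 1 ∨ j = k) → ‖εout j‖ ≤ Bout)
    (hproj_mem : ∀ j, (j = k - 1 ∨ j = k) → lam (j + 1) ∈ D)
    (hproj_min : ∀ j, (j = k - 1 ∨ j = k) → ∀ y ∈ D,
      dist (lam j + (1 / L) • (A (xt j) - b + εout j)) (lam (j + 1)) ≤
        dist (lam j + (1 / L) • (A (xt j) - b + εout j)) y)
    -- (iv) inexact-oracle inequalities for `j ∈ {k−1, k}`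
    (horacle : ∀ j, (j = k - 1 ∨ j = k) → ∀ l ∈ Dδ,
      0 ≥ Φ l - ((Lρ (xt j) (lam j) + Bout * Blam) +
            ⟪A (xt j) - b + εout j, l - lam j⟫) ∧
      Φ l - ((Lρ (xt j) (lam j) + Bout * Blam) +
            ⟪A (xt j) - b + εout j, l - lam j⟫) ≥
        -(L / 2) * ‖l - lam j‖ ^ 2 - δ)
    -- the constant `E`
    (Econst : ℝ)
    (hEdef : Econst = (1 + 4 / L) * Blam * Bout + (1 + 4 / L) * Bin +
      (1 / 2 + 1 / (2 * L)) * Bout ^ 2) :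
    ∀ l ∈ D,
      f (xt k) - f xstar + ⟪l, A (xt k) - b⟫ ≤
        (L / 2 * ‖lam k - l‖ ^ 2 + 1 / 2 * ‖lam (k - 1) - lamstar‖ ^ 2) -
          (L / 2 * ‖lam (k + 1) - l‖ ^ 2 + 1 / 2 * ‖lam k - lamstar‖ ^ 2) +
          Econst :=
  intermediate_lemma_general n p f X A b ρ hρ Lρ hLρ Φ hΦ k hk Bin Bout Blam L hLdef δ hδdef xstar
    hxstarX hxstar_feas lamstar hlamstar_max D Dδ hDconvex hlamstarD hDsub hDδ_diam lam xt εin εout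
    hxt_approx hεin hεout hproj_mem hproj_min horacle Econst hEdef
end

section
/- (Theorem 2(a), primal suboptimality) Let K ≥ 1, let x̃_1, …, x̃_K ∈ X with ergodic average x̄_K = (1/K)·Σ_{k=1}^{K} x̃_k, let λ_0, …, λ_{K+1} ∈ ℝᵖ, let L > 0, E ≥ 0, and let D ⊆ ℝᵖ. Define φ^k(λ) = (L/2)‖λ_k − λ‖² + (1/2)‖λ_{k−1} − λ*‖². Assume: (i) x* ∈ X satisfies Ax* = b and (x*, λ*) is a saddle point of the Lagrangian L(x;λ) = f(x) + ⟨Ax − b, λ⟩, i.e. L(x*;λ) ≤ L(x*;λ*) ≤ L(x;λ*) for all x ∈ X, λ ∈ ℝᵖ; (ii) 0 ∈ D and 2λ* ∈ D; (iii) for every k ∈ {1,…,K} and every λ ∈ D: f(x̃_k) − f(x*) + ⟨λ, r(x̃_k)⟩ ≤ φ^k(λ) − φ^{k+1}(λ) + E. Then −((1/K)·φ^1(2λ*) + E) ≤ f(x̄_K) − f(x*) ≤ (1/K)·φ^1(0) + E. -/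
/-!
For each `λ ∈ D` the map `x ↦ f x - f x* + ⟪λ, A x - b⟫` is convex, so by Jensen its value at the
ergodic average is at most the mean of its values at the iterates; summing the per-iteration
inequalities telescopes, and dropping `φ^{K+1} ≥ 0` bounds that mean by `φ^1(λ)/K + E`.
Taking `λ = 0` gives the upper bound. Taking `λ = 2λ*` and adding twice the saddle inequality
`f x* ≤ f x̄ + ⟪λ*, A x̄ - b⟫` (valid since `x̄ ∈ X` and `A x* = b`) gives the lower bound.
-/

open RealInnerProductSpace Finset

section Average

variable {ι E : Type*} [AddCommGroup E] [Module ℝ E] {s : Finset ι} {x : ι → E} {X : Set E}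

lemma sum_inv_card_eq_one (hs : s.Nonempty) : ∑ _i ∈ s, (#s : ℝ)⁻¹ = 1 := by
  rw [sum_const, nsmul_eq_mul, mul_inv_cancel₀ (by exact_mod_cast hs.card_pos.ne')]

lemma Convex.inv_card_smul_sum_mem (hX : Convex ℝ X) (hs : s.Nonempty)
    (hx : ∀ i ∈ s, x i ∈ X) : (#s : ℝ)⁻¹ • ∑ i ∈ s, x i ∈ X := by
  rw [smul_sum]
  exact hX.sum_mem (fun _ _ => by positivity) (sum_inv_card_eq_one hs) hx

lemma ConvexOn.map_inv_card_smul_sum_le {g : E → ℝ} (hg : ConvexOn ℝ X g) (hs : s.Nonempty)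
    (hx : ∀ i ∈ s, x i ∈ X) :
    g ((#s : ℝ)⁻¹ • ∑ i ∈ s, x i) ≤ (#s : ℝ)⁻¹ * ∑ i ∈ s, g (x i) := by
  rw [smul_sum, mul_sum]
  exact hg.map_sum_le (fun _ _ => by positivity) (sum_inv_card_eq_one hs) hx

end Average

lemma sum_Icc_one_sub_succ {M : Type*} [AddCommGroup M] (φ : ℕ → M) (K : ℕ) :
    ∑ k ∈ Icc 1 K, (φ k - φ (k + 1)) = φ 1 - φ (K + 1) := by
  induction K with
  | zero => simp
  | succ K ih => rw [sum_Icc_succ_top (by omega), ih]; abel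

lemma sum_Icc_le_of_le_sub_succ {g φ : ℕ → ℝ} {e : ℝ} {K : ℕ}
    (h : ∀ k ∈ Icc 1 K, g k ≤ φ k - φ (k + 1) + e) (hφ : 0 ≤ φ (K + 1)) :
    ∑ k ∈ Icc 1 K, g k ≤ φ 1 + K * e := by
  calc ∑ k ∈ Icc 1 K, g k ≤ ∑ k ∈ Icc 1 K, (φ k - φ (k + 1) + e) := sum_le_sum h
    _ = φ 1 - φ (K + 1) + K * e := by
      rw [sum_add_distrib, sum_Icc_one_sub_succ, sum_const, Nat.card_Icc, Nat.add_sub_cancel,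
        nsmul_eq_mul]
    _ ≤ φ 1 + K * e := by linarith

section Lagrangian

variable {E F : Type*} [AddCommGroup E] [Module ℝ E] [NormedAddCommGroup F]
  [InnerProductSpace ℝ F]

lemma convexOn_inner_sub (A : E →ₗ[ℝ] F) (b l : F) :
    ConvexOn ℝ Set.univ fun x => ⟪l, A x - b⟫ := by
  have h : (fun x => ⟪l, A x - b⟫) = (⇑((innerₛₗ ℝ l) ∘ₗ A) + fun _ => -⟪l, b⟫) := by
    funext x
    simp [inner_sub_right, ← sub_eq_add_neg]
  rw [h]
  exact (((innerₛₗ ℝ l) ∘ₗ A).convexOn convex_univ).add_const _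

lemma lagrangian_gap_average_le (A : E →ₗ[ℝ] F) (b l : F) {f : E → ℝ}
    (hf : ConvexOn ℝ Set.univ f) (c : ℝ) {K : ℕ} (hK : 1 ≤ K) (x : ℕ → E) {φ : ℕ → ℝ} {e : ℝ}
    (hφ : 0 ≤ φ (K + 1))
    (h : ∀ k ∈ Icc 1 K, f (x k) - c + ⟪l, A (x k) - b⟫ ≤ φ k - φ (k + 1) + e) :
    f ((K : ℝ)⁻¹ • ∑ k ∈ Icc 1 K, x k) - c + ⟪l, A ((K : ℝ)⁻¹ • ∑ k ∈ Icc 1 K, x k) - b⟫ ≤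
      1 / K * φ 1 + e := by
  have hg : ConvexOn ℝ Set.univ fun y => f y - c + ⟪l, A y - b⟫ := by
    have h : (fun y => f y - c + ⟪l, A y - b⟫) = (f + fun y => ⟪l, A y - b⟫) + fun _ => -c := by
      funext y
      simp only [Pi.add_apply]
      ring
    rw [h]
    exact (hf.add (convexOn_inner_sub A b l)).add_const _
  have hcard : (#(Icc 1 K) : ℝ) = K := by simp
  have hKpos : (0 : ℝ) < K := by exact_mod_cast hK
  calc _ ≤ (K : ℝ)⁻¹ * ∑ k ∈ Icc 1 K, (f (x k) - c + ⟪l, A (x k) - b⟫) := by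
        simpa only [hcard] using
          hg.map_inv_card_smul_sum_le (nonempty_Icc.2 hK) (fun k _ => Set.mem_univ (x k))
    _ ≤ (K : ℝ)⁻¹ * (φ 1 + K * e) := by
        gcongr
        exact sum_Icc_le_of_le_sub_succ h hφ
    _ = 1 / K * φ 1 + e := by field_simp

end Lagrangian

theorem primal_suboptimality_general
    (n p : ℕ)
    (A : EuclideanSpace ℝ (Fin n) →ₗ[ℝ] EuclideanSpace ℝ (Fin p))
    (b : EuclideanSpace ℝ (Fin p))
    (f : EuclideanSpace ℝ (Fin n) → ℝ)
    (hf : ConvexOn ℝ Set.univ f)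
    (X : Set (EuclideanSpace ℝ (Fin n)))
    (hXconvex : Convex ℝ X)
    (K : ℕ) (hK : 1 ≤ K)
    (xt : ℕ → EuclideanSpace ℝ (Fin n))
    (hxt : ∀ k, 1 ≤ k → k ≤ K → xt k ∈ X)
    (lam : ℕ → EuclideanSpace ℝ (Fin p))
    (lamstar : EuclideanSpace ℝ (Fin p))
    (L Econst : ℝ) (hL : 0 < L)
    (D : Set (EuclideanSpace ℝ (Fin p)))
    (φ : ℕ → EuclideanSpace ℝ (Fin p) → ℝ)
    (hφ : ∀ k l,
      φ k l = L / 2 * ‖lam k - l‖ ^ 2 + 1 / 2 * ‖lam (k - 1) - lamstar‖ ^ 2)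
    -- (i) primal feasible optimum and saddle point of the Lagrangian
    (xstar : EuclideanSpace ℝ (Fin n))
    (hxstar_feas : A xstar = b)
    (hsaddle_right : ∀ x ∈ X,
      f xstar + ⟪A xstar - b, lamstar⟫ ≤ f x + ⟪A x - b, lamstar⟫)
    -- (ii) membership in `D`
    (hzeroD : (0 : EuclideanSpace ℝ (Fin p)) ∈ D)
    (h2lamstarD : (2 : ℝ) • lamstar ∈ D)
    -- (iii) per-iteration inequality
    (hstep : ∀ k, 1 ≤ k → k ≤ K → ∀ l ∈ D,
      f (xt k) - f xstar + ⟪l, A (xt k) - b⟫ ≤ φ k l - φ (k + 1) l + Econst) :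
    -(1 / K * φ 1 ((2 : ℝ) • lamstar) + Econst) ≤
        f ((K : ℝ)⁻¹ • ∑ k ∈ Finset.Icc 1 K, xt k) - f xstar ∧
      f ((K : ℝ)⁻¹ • ∑ k ∈ Finset.Icc 1 K, xt k) - f xstar ≤
        1 / K * φ 1 0 + Econst := by
  set xbar := (K : ℝ)⁻¹ • ∑ k ∈ Icc 1 K, xt k
  have hgap : ∀ l ∈ D, f xbar - f xstar + ⟪l, A xbar - b⟫ ≤ 1 / K * φ 1 l + Econst :=
    fun l hl => lagrangian_gap_average_le A b l hf (f xstar) hK xt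
      (by rw [hφ]; positivity) fun k hk => hstep k (mem_Icc.1 hk).1 (mem_Icc.1 hk).2 l hl
  have hxbar : xbar ∈ X := by
    have hcard : (#(Icc 1 K) : ℝ) = K := by simp
    simpa only [hcard] using hXconvex.inv_card_smul_sum_mem (nonempty_Icc.2 hK)
      fun k hk => hxt k (mem_Icc.1 hk).1 (mem_Icc.1 hk).2
  have hdual : f xstar ≤ f xbar + ⟪lamstar, A xbar - b⟫ := by
    simpa [hxstar_feas, real_inner_comm] using hsaddle_right xbar hxbar
  have hupper := hgap 0 hzeroD
  have hlower := hgap _ h2lamstarD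
  rw [inner_zero_left] at hupper
  rw [real_inner_smul_left] at hlower
  constructor <;> linarith

/-- Theorem 2(a): primal suboptimality bounds. -/
theorem primal_suboptimality
    (n p : ℕ)
    (A : EuclideanSpace ℝ (Fin n) →ₗ[ℝ] EuclideanSpace ℝ (Fin p))
    (b : EuclideanSpace ℝ (Fin p))
    (f : EuclideanSpace ℝ (Fin n) → ℝ)
    (hf : ConvexOn ℝ Set.univ f)
    (X : Set (EuclideanSpace ℝ (Fin n)))
    (hXne : X.Nonempty) (hXconvex : Convex ℝ X)
    (K : ℕ) (hK : 1 ≤ K)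
    (xt : ℕ → EuclideanSpace ℝ (Fin n))
    (hxt : ∀ k, 1 ≤ k → k ≤ K → xt k ∈ X)
    (lam : ℕ → EuclideanSpace ℝ (Fin p))
    (lamstar : EuclideanSpace ℝ (Fin p))
    (L Econst : ℝ) (hL : 0 < L) (hE : 0 ≤ Econst)
    (D : Set (EuclideanSpace ℝ (Fin p)))
    (φ : ℕ → EuclideanSpace ℝ (Fin p) → ℝ)
    (hφ : ∀ k l,
      φ k l = L / 2 * ‖lam k - l‖ ^ 2 + 1 / 2 * ‖lam (k - 1) - lamstar‖ ^ 2)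
    -- (i) primal feasible optimum and saddle point of the Lagrangian
    (xstar : EuclideanSpace ℝ (Fin n)) (hxstarX : xstar ∈ X)
    (hxstar_feas : A xstar = b)
    (hsaddle_left : ∀ l : EuclideanSpace ℝ (Fin p),
      f xstar + ⟪A xstar - b, l⟫ ≤ f xstar + ⟪A xstar - b, lamstar⟫)
    (hsaddle_right : ∀ x ∈ X,
      f xstar + ⟪A xstar - b, lamstar⟫ ≤ f x + ⟪A x - b, lamstar⟫)
    -- (ii) membership in `D`
    (hzeroD : (0 : EuclideanSpace ℝ (Fin p)) ∈ D)
    (h2lamstarD : (2 : ℝ) • lamstar ∈ D)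
    -- (iii) per-iteration inequality
    (hstep : ∀ k, 1 ≤ k → k ≤ K → ∀ l ∈ D,
      f (xt k) - f xstar + ⟪l, A (xt k) - b⟫ ≤ φ k l - φ (k + 1) l + Econst) :
    -(1 / K * φ 1 ((2 : ℝ) • lamstar) + Econst) ≤
        f ((K : ℝ)⁻¹ • ∑ k ∈ Finset.Icc 1 K, xt k) - f xstar ∧
      f ((K : ℝ)⁻¹ • ∑ k ∈ Finset.Icc 1 K, xt k) - f xstar ≤
        1 / K * φ 1 0 + Econst :=
  primal_suboptimality_general n p A b f hf X hXconvex K hK xt hxt lam lamstar L Econst hL D φ hφ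
    xstar hxstar_feas hsaddle_right hzeroD h2lamstarD hstep
end

section
/- (Lemma 3, stopping criterion) Let f : ℝⁿ → ℝ be convex, let X ⊆ ℝⁿ be nonempty, closed and convex, let X* ⊆ X be the (nonempty) set of minimizers of f over X, and let f* = min_{x∈X} f(x). Let σ > 0 and assume the quadratic growth condition: f(x) ≥ f* + (σ/2)·dist²(x, X*) for all x ∈ X, where dist(x, X*) = inf_{y∈X*} ‖x − y‖. Then for every x ∈ X, every subgradient g of f at x (i.e. every g ∈ ℝⁿ with f(y) ≥ f(x) + ⟨g, y − x⟩ for all y ∈ ℝⁿ), and every s in the normal cone N_X(x) = {s ∈ ℝⁿ : ⟨s, y − x⟩ ≤ 0 for all y ∈ X}: f(x) − f* ≤ (2/σ)·‖g + s‖². -/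
open RealInnerProductSpace

/-- Lemma 3: stopping criterion under quadratic growth. -/
theorem stopping_criterion
    (n : ℕ)
    (f : EuclideanSpace ℝ (Fin n) → ℝ)
    (hf : ConvexOn ℝ Set.univ f)
    (X : Set (EuclideanSpace ℝ (Fin n)))
    (hXne : X.Nonempty) (hXclosed : IsClosed X) (hXconvex : Convex ℝ X)
    (Xstar : Set (EuclideanSpace ℝ (Fin n)))
    (hXstar : Xstar = {y | y ∈ X ∧ ∀ z ∈ X, f y ≤ f z})
    (hXstar_ne : Xstar.Nonempty)
    (fstar : ℝ)
    (hfstar_val : ∀ y ∈ Xstar, f y = fstar)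
    (hfstar_min : ∀ x ∈ X, fstar ≤ f x)
    (σ : ℝ) (hσ : 0 < σ)
    (hQG : ∀ x ∈ X, f x ≥ fstar + σ / 2 * (Metric.infDist x Xstar) ^ 2) :
    ∀ x ∈ X, ∀ g : EuclideanSpace ℝ (Fin n),
      (∀ y, f y ≥ f x + ⟪g, y - x⟫) →
      ∀ s : EuclideanSpace ℝ (Fin n),
        (∀ y ∈ X, ⟪s, y - x⟫ ≤ 0) →
        f x - fstar ≤ 2 / σ * ‖g + s‖ ^ 2 := by
  intro x hx g hg s hs
  set K := ‖g + s‖ with hK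
  have hK0 : 0 ≤ K := norm_nonneg _
  -- For every minimizer y, f x - fstar ≤ K * dist x y
  have key : ∀ y ∈ Xstar, f x - fstar ≤ K * dist x y := by
    intro y hy
    have hyX : y ∈ X := by rw [hXstar] at hy; exact hy.1
    have h1 : fstar ≥ f x + ⟪g, y - x⟫ := by
      rw [← hfstar_val y hy]; exact hg y
    have h2 : ⟪s, y - x⟫ ≤ 0 := hs y hyX
    have h3 : f x - fstar ≤ ⟪g + s, x - y⟫ := by
      have : ⟪g + s, x - y⟫ = -⟪g, y - x⟫ - ⟪s, y - x⟫ := by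
        rw [inner_add_left]
        rw [show (x - y : EuclideanSpace ℝ (Fin n)) = -(y - x) by abel]
        rw [inner_neg_right, inner_neg_right]; ring
      rw [this]; linarith
    calc f x - fstar ≤ ⟪g + s, x - y⟫ := h3
      _ ≤ ‖g + s‖ * ‖x - y‖ := real_inner_le_norm _ _
      _ = K * dist x y := by rw [dist_eq_norm]
  set d := Metric.infDist x Xstar with hd
  have hd0 : 0 ≤ d := Metric.infDist_nonneg
  have hle : f x - fstar ≤ K * d := by
    rcases eq_or_lt_of_le hK0 with hK0' | hKpos
    · obtain ⟨y, hy⟩ := hXstar_ne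
      have := key y hy
      nlinarith [dist_nonneg (x := x) (y := y)]
    · have : (f x - fstar) / K ≤ d := by
        by_contra hcon
        rw [not_le, hd, Metric.infDist_lt_iff hXstar_ne] at hcon
        obtain ⟨y, hy, hlt⟩ := hcon
        have := key y hy
        rw [lt_div_iff₀ hKpos] at hlt
        nlinarith
      calc f x - fstar = (f x - fstar) / K * K := by field_simp
        _ ≤ d * K := by exact mul_le_mul_of_nonneg_right this hK0
        _ = K * d := by ring
  have hQGx := hQG x hx
  -- σ/2 * d^2 ≤ f x - fstar ≤ K * d, so d ≤ 2K/σ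
  have hdK : σ / 2 * d ^ 2 ≤ K * d := by linarith
  have hdle : d ≤ 2 * K / σ := by
    rcases eq_or_lt_of_le hd0 with hd0' | hdpos
    · rw [← hd0']; positivity
    · rw [le_div_iff₀ hσ]; nlinarith
  calc f x - fstar ≤ K * d := hle
    _ ≤ K * (2 * K / σ) := mul_le_mul_of_nonneg_left hdle hK0
    _ = 2 / σ * K ^ 2 := by ring
end

section
/- (Guaranteed early termination) Let f : ℝⁿ → ℝ be convex, let X ⊆ ℝⁿ be nonempty, closed and convex, let X* ⊆ X be the (nonempty) set of minimizers of f over X, and let f* = min_{x∈X} f(x). Let σ > 0 and assume f(x) ≥ f* + (σ/2)·dist²(x, X*) for all x ∈ X. Let B_in > 0. If x_t ∈ X, g is a subgradient of f at x_t (i.e. f(y) ≥ f(x_t) + ⟨g, y − x_t⟩ for all y ∈ ℝⁿ), s ∈ N_X(x_t) = {s : ⟨s, y − x_t⟩ ≤ 0 for all y ∈ X}, and ‖g + s‖ ≤ √((σ/2)·B_in), then f(x_t) − f* ≤ B_in. -/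
/-!
At any minimiser `y`, the subgradient inequality for `g` and the normal-cone inequality for `s`
give `f x - f* ≤ ⟪g + s, x - y⟫ ≤ ‖g + s‖ ‖x - y‖`, hence `f x - f* ≤ ‖g + s‖ · dist(x, X*)`.
Combined with quadratic growth `σ/2 · dist(x, X*)² ≤ f x - f*` this yields the error bound
`f x - f* ≤ 2 ‖g + s‖² / σ`, which is at most `B_in` under the stopping criterion.
-/

open RealInnerProductSpace Metric

theorem le_mul_infDist_of_forall_le_mul_dist {α : Type*} [PseudoMetricSpace α] {S : Set α}
    {x : α} {a C : ℝ} (hS : S.Nonempty) (hC : 0 ≤ C) (h : ∀ y ∈ S, a ≤ C * dist x y) :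
    a ≤ C * infDist x S := by
  obtain ⟨y₀, hy₀⟩ := hS
  rcases hC.eq_or_lt with rfl | hC
  · simpa using h y₀ hy₀
  · rw [← div_le_iff₀' hC, le_infDist ⟨y₀, hy₀⟩]
    intro y hy
    rw [div_le_iff₀' hC]
    exact h y hy

theorem le_two_mul_sq_div_of_le_mul_of_half_mul_sq_le {Δ C d σ : ℝ} (hσ : 0 < σ)
    (hΔ : Δ ≤ C * d) (hgrowth : σ / 2 * d ^ 2 ≤ Δ) : Δ ≤ 2 * C ^ 2 / σ := by
  have hΔ0 : 0 ≤ Δ := le_trans (by positivity) hgrowth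
  rw [le_div_iff₀ hσ]
  rcases hΔ0.eq_or_lt with rfl | hpos
  · rw [zero_mul]; positivity
  refine le_of_mul_le_mul_left ?_ hpos
  calc Δ * (Δ * σ) = Δ ^ 2 * σ := by ring
    _ ≤ (C * d) ^ 2 * σ := by gcongr
    _ = C ^ 2 * (σ * d ^ 2) := by ring
    _ ≤ C ^ 2 * (2 * Δ) := mul_le_mul_of_nonneg_left (by linarith) (sq_nonneg C)
    _ = Δ * (2 * C ^ 2) := by ring

section InnerProductSpace

variable {E : Type*} [NormedAddCommGroup E] [InnerProductSpace ℝ E]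

theorem sub_le_inner_add_of_subgradient_of_normal {f : E → ℝ} {x y g s : E}
    (hg : f y ≥ f x + ⟪g, y - x⟫) (hs : ⟪s, y - x⟫ ≤ 0) :
    f x - f y ≤ ⟪g + s, x - y⟫ := by
  rw [← neg_sub y x, inner_neg_right, inner_add_left]
  linarith

theorem sub_le_norm_mul_infDist_of_subgradient_of_normal {f : E → ℝ} {X S : Set E}
    {x g s : E} {c : ℝ} (hS : S.Nonempty) (hSX : S ⊆ X) (hSc : ∀ y ∈ S, f y = c)
    (hg : ∀ y, f y ≥ f x + ⟪g, y - x⟫) (hs : ∀ y ∈ X, ⟪s, y - x⟫ ≤ 0) :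
    f x - c ≤ ‖g + s‖ * infDist x S := by
  refine le_mul_infDist_of_forall_le_mul_dist hS (norm_nonneg _) fun y hy => ?_
  calc f x - c = f x - f y := by rw [hSc y hy]
    _ ≤ ⟪g + s, x - y⟫ := sub_le_inner_add_of_subgradient_of_normal (hg y) (hs y (hSX hy))
    _ ≤ ‖g + s‖ * ‖x - y‖ := real_inner_le_norm _ _
    _ = ‖g + s‖ * dist x y := by rw [dist_eq_norm]

end InnerProductSpace

theorem early_termination_general
    (n : ℕ)
    (f : EuclideanSpace ℝ (Fin n) → ℝ)
    (X : Set (EuclideanSpace ℝ (Fin n)))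
    (Xstar : Set (EuclideanSpace ℝ (Fin n)))
    (hXstar : Xstar = {y | y ∈ X ∧ ∀ z ∈ X, f y ≤ f z})
    (hXstar_ne : Xstar.Nonempty)
    (fstar : ℝ)
    (hfstar_val : ∀ y ∈ Xstar, f y = fstar)
    (σ : ℝ) (hσ : 0 < σ)
    (hQG : ∀ x ∈ X, f x ≥ fstar + σ / 2 * (Metric.infDist x Xstar) ^ 2)
    (Bin : ℝ) (hBin : 0 < Bin)
    (xtk : EuclideanSpace ℝ (Fin n)) (hxtk : xtk ∈ X)
    (g : EuclideanSpace ℝ (Fin n))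
    (hg : ∀ y, f y ≥ f xtk + ⟪g, y - xtk⟫)
    (s : EuclideanSpace ℝ (Fin n))
    (hs : ∀ y ∈ X, ⟪s, y - xtk⟫ ≤ 0)
    (hstop : ‖g + s‖ ≤ Real.sqrt (σ / 2 * Bin)) :
    f xtk - fstar ≤ Bin := by
  have hXstar_sub : Xstar ⊆ X := by rw [hXstar]; exact fun _ hy => hy.1
  have hlinear : f xtk - fstar ≤ ‖g + s‖ * infDist xtk Xstar :=
    sub_le_norm_mul_infDist_of_subgradient_of_normal hXstar_ne hXstar_sub hfstar_val hg hs
  have hgrowth : σ / 2 * infDist xtk Xstar ^ 2 ≤ f xtk - fstar := by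
    linarith [hQG xtk hxtk]
  have hsq : ‖g + s‖ ^ 2 ≤ σ / 2 * Bin :=
    (Real.le_sqrt (norm_nonneg _) (by positivity)).mp hstop
  calc f xtk - fstar ≤ 2 * ‖g + s‖ ^ 2 / σ :=
        le_two_mul_sq_div_of_le_mul_of_half_mul_sq_le hσ hlinear hgrowth
    _ ≤ Bin := by rw [div_le_iff₀ hσ]; linarith

/-- guaranteed early termination of the subproblem solver. -/
theorem early_termination
    (n : ℕ)
    (f : EuclideanSpace ℝ (Fin n) → ℝ)
    (hf : ConvexOn ℝ Set.univ f)
    (X : Set (EuclideanSpace ℝ (Fin n)))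
    (hXne : X.Nonempty) (hXclosed : IsClosed X) (hXconvex : Convex ℝ X)
    (Xstar : Set (EuclideanSpace ℝ (Fin n)))
    (hXstar : Xstar = {y | y ∈ X ∧ ∀ z ∈ X, f y ≤ f z})
    (hXstar_ne : Xstar.Nonempty)
    (fstar : ℝ)
    (hfstar_val : ∀ y ∈ Xstar, f y = fstar)
    (hfstar_min : ∀ x ∈ X, fstar ≤ f x)
    (σ : ℝ) (hσ : 0 < σ)
    (hQG : ∀ x ∈ X, f x ≥ fstar + σ / 2 * (Metric.infDist x Xstar) ^ 2)
    (Bin : ℝ) (hBin : 0 < Bin)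
    (xtk : EuclideanSpace ℝ (Fin n)) (hxtk : xtk ∈ X)
    (g : EuclideanSpace ℝ (Fin n))
    (hg : ∀ y, f y ≥ f xtk + ⟪g, y - xtk⟫)
    (s : EuclideanSpace ℝ (Fin n))
    (hs : ∀ y ∈ X, ⟪s, y - xtk⟫ ≤ 0)
    (hstop : ‖g + s‖ ≤ Real.sqrt (σ / 2 * Bin)) :
    f xtk - fstar ≤ Bin :=
  early_termination_general n f X Xstar hXstar hXstar_ne fstar hfstar_val σ hσ hQG Bin hBin xtk hxtk
    g hg s hs hstop
end

section
/- For each i = 1,…,N let h_i : ℝ^{m_i} → ℝ be σ_i-strongly convex with σ_i > 0, let A_i be an m_i×n real matrix and b_i ∈ ℝ^{m_i}, and define H(x) = Σ_{i=1}^{N} h_i(A_i x − b_i). Let X ⊆ ℝⁿ be a nonempty convex set and let x* ∈ X minimize H over X. Then for every x ∈ X: H(x) ≥ H(x*) + Σ_{i=1}^{N} (σ_i/2)·‖A_i(x − x*)‖². -/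
open RealInnerProductSpace

lemma norm_combo_sq' {E : Type*} [NormedAddCommGroup E] [InnerProductSpace ℝ E]
    (u v : E) (t : ℝ) :
    ‖(1 - t) • u + t • v‖ ^ 2
      = (1 - t) * ‖u‖ ^ 2 + t * ‖v‖ ^ 2 - t * (1 - t) * ‖u - v‖ ^ 2 := by
  rw [← real_inner_self_eq_norm_sq, ← real_inner_self_eq_norm_sq u,
    ← real_inner_self_eq_norm_sq v, ← real_inner_self_eq_norm_sq (u - v)]
  simp only [inner_add_left, inner_add_right, inner_sub_left, inner_sub_right,
    inner_smul_left, inner_smul_right, conj_trivial]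
  have hc : ⟪v, u⟫ = ⟪u, v⟫ := real_inner_comm u v
  rw [hc]; ring

/-- growth of a separable strongly convex composite around a
minimizer.  `h i` being `σ i`-strongly convex is expressed by convexity of
`h i - (σ i / 2)‖·‖²`. -/
theorem separable_strongly_convex_composite_growth
    (n N : ℕ) (m : Fin N → ℕ)
    (h : (i : Fin N) → EuclideanSpace ℝ (Fin (m i)) → ℝ)
    (σ : Fin N → ℝ) (hσ : ∀ i, 0 < σ i)
    (hsc : ∀ i, ConvexOn ℝ Set.univ (fun y => h i y - σ i / 2 * ‖y‖ ^ 2))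
    (A : (i : Fin N) → EuclideanSpace ℝ (Fin n) →ₗ[ℝ] EuclideanSpace ℝ (Fin (m i)))
    (b : (i : Fin N) → EuclideanSpace ℝ (Fin (m i)))
    (X : Set (EuclideanSpace ℝ (Fin n)))
    (hXne : X.Nonempty) (hXconvex : Convex ℝ X)
    (xstar : EuclideanSpace ℝ (Fin n)) (hxstar : xstar ∈ X)
    (hmin : ∀ x ∈ X,
      (∑ i, h i (A i xstar - b i)) ≤ ∑ i, h i (A i x - b i)) :
    ∀ x ∈ X,
      (∑ i, h i (A i x - b i)) ≥
        (∑ i, h i (A i xstar - b i)) + ∑ i, σ i / 2 * ‖A i (x - xstar)‖ ^ 2 := by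
  intro x hx
  set Hs := ∑ i, h i (A i xstar - b i) with hHs
  set Hx := ∑ i, h i (A i x - b i) with hHx
  set S := ∑ i, σ i / 2 * ‖A i (x - xstar)‖ ^ 2 with hS
  have hSnn : (0:ℝ) ≤ S := Finset.sum_nonneg fun i _ => by have := (hσ i).le; positivity
  have key : ∀ t : ℝ, 0 < t → t < 1 → Hs + (1 - t) * S ≤ Hx := by
    intro t ht0 ht1
    have hxt : (1 - t) • xstar + t • x ∈ X :=
      hXconvex hxstar hx (by linarith) ht0.le (by ring)
    have hle := hmin _ hxt
    have hterm : ∀ i : Fin N,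
        h i (A i ((1 - t) • xstar + t • x) - b i)
          ≤ (1 - t) * h i (A i xstar - b i) + t * h i (A i x - b i)
            - t * (1 - t) * (σ i / 2 * ‖A i (x - xstar)‖ ^ 2) := by
      intro i
      have hcvx := (hsc i).2 (Set.mem_univ (A i xstar - b i)) (Set.mem_univ (A i x - b i))
        (by linarith : (0:ℝ) ≤ 1 - t) ht0.le (by ring)
      simp only at hcvx
      have harg : A i ((1 - t) • xstar + t • x) - b i
          = (1 - t) • (A i xstar - b i) + t • (A i x - b i) := by
        simp only [map_add, map_smul, smul_sub]
        module
      have hnorm : ‖(A i xstar - b i) - (A i x - b i)‖ = ‖A i (x - xstar)‖ := by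
        rw [show (A i xstar - b i) - (A i x - b i) = -(A i (x - xstar)) by
          simp only [map_sub]; abel]
        exact norm_neg _
      have hns := norm_combo_sq' (A i xstar - b i) (A i x - b i) t
      rw [hnorm] at hns
      simp only [smul_eq_mul] at hcvx
      rw [hns] at hcvx
      rw [harg]
      nlinarith [hcvx]
    have hsum : ∑ i, h i (A i ((1 - t) • xstar + t • x) - b i)
        ≤ (1 - t) * Hs + t * Hx - t * (1 - t) * S := by
      calc ∑ i, h i (A i ((1 - t) • xstar + t • x) - b i)
          ≤ ∑ i, ((1 - t) * h i (A i xstar - b i) + t * h i (A i x - b i)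
            - t * (1 - t) * (σ i / 2 * ‖A i (x - xstar)‖ ^ 2)) :=
            Finset.sum_le_sum fun i _ => hterm i
        _ = (1 - t) * Hs + t * Hx - t * (1 - t) * S := by
            rw [hHs, hHx, hS, Finset.mul_sum, Finset.mul_sum, Finset.mul_sum]
            rw [← Finset.sum_add_distrib, ← Finset.sum_sub_distrib]
    have h2 : t * (Hs + (1 - t) * S) ≤ t * Hx := by nlinarith [le_trans hle hsum]
    exact le_of_mul_le_mul_left h2 ht0
  have hfin : ∀ ε > (0:ℝ), Hs + S ≤ Hx + ε := by
    intro ε hε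
    set t := min (1/2 : ℝ) (ε / (S + 1)) with ht
    have ht0 : 0 < t := lt_min (by norm_num) (div_pos hε (by linarith))
    have ht1 : t < 1 := lt_of_le_of_lt (min_le_left _ _) (by norm_num)
    have hk := key t ht0 ht1
    have htS : t * S ≤ ε := by
      have h1 : t ≤ ε / (S + 1) := min_le_right _ _
      have h2 : t * S ≤ (ε / (S + 1)) * (S + 1) := by nlinarith
      rw [div_mul_cancel₀ _ (by linarith : S + 1 ≠ 0)] at h2
      exact h2
    linarith
  exact le_of_forall_pos_le_add hfin
end

section
/- For each i = 1,…,N let h_i : ℝ^{m_i} → ℝ be σ_i-strongly convex with σ_i > 0, let A_i be an m_i×n real matrix and b_i ∈ ℝ^{m_i}, and define H(x) = Σ_{i=1}^{N} h_i(A_i x − b_i). Let X = {x ∈ ℝⁿ : Cx ≤ d} be a nonempty polyhedron (C a q×n matrix, d ∈ ℝ^q, inequality componentwise) and let x* ∈ X minimize H over X. Then a point x ∈ X minimizes H over X if and only if A_i x = A_i x* for all i = 1,…,N; equivalently, the solution set satisfies X* = {x ∈ ℝⁿ : Ãx = Ãx*, Cx ≤ d}, where Ã is the matrix obtained by stacking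 A_1, …, A_N vertically. -/
/-!
If `x` and `y` both minimize `H = ∑ i, h i (A i · - c i)` over a convex set, their midpoint `z`
lies in that set too, and strong convexity of each `h i` gives
`H z ≤ (H x + H y) / 2 - (1 / 4) ∑ i, σ i / 2 * ‖A i x - A i y‖ ^ 2`.
Since `H z ≥ H x = H y`, the nonnegative sum vanishes, so `A i x = A i y` for every `i`.
-/

open Set

variable {E F : Type*} [AddCommGroup E] [Module ℝ E]
  [NormedAddCommGroup F] [InnerProductSpace ℝ F]

lemma StrongConvexOn.comp_linearMap_sub_le {f : F → ℝ} {m : ℝ} (hf : StrongConvexOn univ m f)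
    (A : E →ₗ[ℝ] F) (c : F) (x y : E) {a b : ℝ} (ha : 0 ≤ a) (hb : 0 ≤ b) (hab : a + b = 1) :
    f (A (a • x + b • y) - c) ≤
      a * f (A x - c) + b * f (A y - c) - a * b * (m / 2 * ‖A x - A y‖ ^ 2) := by
  have hcomb : A (a • x + b • y) - c = a • (A x - c) + b • (A y - c) := by
    obtain rfl : b = 1 - a := by linarith
    rw [map_add, map_smul, map_smul]
    module
  have := hf.2 (mem_univ (A x - c)) (mem_univ (A y - c)) ha hb hab
  rw [sub_sub_sub_cancel_right, ← hcomb, smul_eq_mul, smul_eq_mul] at this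
  simpa only [mul_assoc] using this

theorem eq_of_isMinOn_sum_strongConvexOn {ι : Type*} [Fintype ι] {G : ι → Type*}
    [∀ i, NormedAddCommGroup (G i)] [∀ i, InnerProductSpace ℝ (G i)]
    {h : ∀ i, G i → ℝ} {σ : ι → ℝ} (hσ : ∀ i, 0 < σ i)
    (hh : ∀ i, StrongConvexOn univ (σ i) (h i)) (A : ∀ i, E →ₗ[ℝ] G i) (c : ∀ i, G i)
    {s : Set E} (hs : Convex ℝ s) {x y : E} (hx : x ∈ s) (hy : y ∈ s)
    (hxmin : IsMinOn (fun x ↦ ∑ i, h i (A i x - c i)) s x)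
    (hymin : IsMinOn (fun x ↦ ∑ i, h i (A i x - c i)) s y) (i : ι) :
    A i x = A i y := by
  set H : E → ℝ := fun x ↦ ∑ i, h i (A i x - c i)
  set gap : ι → ℝ := fun i ↦ σ i / 2 * ‖A i x - A i y‖ ^ 2
  have hgap_nonneg : ∀ j, 0 ≤ gap j := fun j ↦ by have := hσ j; positivity
  have hmid : H ((1 / 2 : ℝ) • x + (1 / 2 : ℝ) • y) ≤
      1 / 2 * H x + 1 / 2 * H y - 1 / 2 * (1 / 2) * ∑ j, gap j := by
    simpa only [Finset.sum_sub_distrib, Finset.sum_add_distrib, ← Finset.mul_sum] using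
      Finset.sum_le_sum fun j (_ : j ∈ Finset.univ) ↦
        (hh j).comp_linearMap_sub_le (A j) (c j) x y (a := 1 / 2) (b := 1 / 2)
          (by norm_num) (by norm_num) (by norm_num)
  have hz : (1 / 2 : ℝ) • x + (1 / 2 : ℝ) • y ∈ s :=
    hs hx hy (by norm_num) (by norm_num) (by norm_num)
  have hxz := isMinOn_iff.mp hxmin _ hz
  have hyx := isMinOn_iff.mp hymin x hx
  have hgap_i : gap i ≤ 0 := by
    have := Finset.single_le_sum (fun j _ ↦ hgap_nonneg j) (Finset.mem_univ i)
    linarith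
  have hnorm : ‖A i x - A i y‖ ^ 2 ≤ 0 :=
    nonpos_of_mul_nonpos_right hgap_i (by have := hσ i; positivity)
  exact sub_eq_zero.mp <| norm_eq_zero.mp <| (sq_nonpos_iff _).mp hnorm

theorem separable_strongly_convex_solution_set_general
    (n N q : ℕ) (m : Fin N → ℕ)
    (h : (i : Fin N) → EuclideanSpace ℝ (Fin (m i)) → ℝ)
    (σ : Fin N → ℝ) (hσ : ∀ i, 0 < σ i)
    (hsc : ∀ i, ConvexOn ℝ Set.univ (fun y => h i y - σ i / 2 * ‖y‖ ^ 2))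
    (A : (i : Fin N) → EuclideanSpace ℝ (Fin n) →ₗ[ℝ] EuclideanSpace ℝ (Fin (m i)))
    (b : (i : Fin N) → EuclideanSpace ℝ (Fin (m i)))
    (C : EuclideanSpace ℝ (Fin n) →ₗ[ℝ] (Fin q → ℝ)) (d : Fin q → ℝ)
    (X : Set (EuclideanSpace ℝ (Fin n)))
    (hX : X = {x | ∀ j, C x j ≤ d j})
    (xstar : EuclideanSpace ℝ (Fin n)) (hxstar : xstar ∈ X)
    (hmin : ∀ x ∈ X,
      (∑ i, h i (A i xstar - b i)) ≤ ∑ i, h i (A i x - b i)) :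
    ∀ x ∈ X,
      ((∀ y ∈ X, (∑ i, h i (A i x - b i)) ≤ ∑ i, h i (A i y - b i)) ↔
        ∀ i, A i x = A i xstar) := by
  have hXconvex : Convex ℝ X := hX ▸ (convex_Iic d).linear_preimage C
  have hstrong i : StrongConvexOn univ (σ i) (h i) := strongConvexOn_iff_convex.mpr (hsc i)
  intro x hx
  constructor
  · intro hxmin
    exact eq_of_isMinOn_sum_strongConvexOn hσ hstrong A b hXconvex hx hxstar
      (isMinOn_iff.mpr hxmin) (isMinOn_iff.mpr hmin)
  · intro hA y hy
    simpa only [hA] using hmin y hy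

/-- characterization of the solution set of a separable strongly
convex composite over a polyhedron: `x ∈ X` minimizes `H` over `X` iff
`A i x = A i x*` for all `i`.  The polyhedron `X = {x : Cx ≤ d}` is written
with a linear map `C` into `Fin q → ℝ` and componentwise inequalities. -/
theorem separable_strongly_convex_solution_set
    (n N q : ℕ) (m : Fin N → ℕ)
    (h : (i : Fin N) → EuclideanSpace ℝ (Fin (m i)) → ℝ)
    (σ : Fin N → ℝ) (hσ : ∀ i, 0 < σ i)
    (hsc : ∀ i, ConvexOn ℝ Set.univ (fun y => h i y - σ i / 2 * ‖y‖ ^ 2))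
    (A : (i : Fin N) → EuclideanSpace ℝ (Fin n) →ₗ[ℝ] EuclideanSpace ℝ (Fin (m i)))
    (b : (i : Fin N) → EuclideanSpace ℝ (Fin (m i)))
    (C : EuclideanSpace ℝ (Fin n) →ₗ[ℝ] (Fin q → ℝ)) (d : Fin q → ℝ)
    (X : Set (EuclideanSpace ℝ (Fin n)))
    (hX : X = {x | ∀ j, C x j ≤ d j})
    (hXne : X.Nonempty)
    (xstar : EuclideanSpace ℝ (Fin n)) (hxstar : xstar ∈ X)
    (hmin : ∀ x ∈ X,
      (∑ i, h i (A i xstar - b i)) ≤ ∑ i, h i (A i x - b i)) :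
    ∀ x ∈ X,
      ((∀ y ∈ X, (∑ i, h i (A i x - b i)) ≤ ∑ i, h i (A i y - b i)) ↔
        ∀ i, A i x = A i xstar) :=
  separable_strongly_convex_solution_set_general n N q m h σ hσ hsc A b C d X hX xstar hxstar hmin
end

section
/- (Lemma 4, quadratic growth of separable strongly convex composites) For each i = 1,…,N let h_i : ℝ^{m_i} → ℝ be σ_i-strongly convex with σ_i > 0, let A_i be an m_i×n real matrix and b_i ∈ ℝ^{m_i}, and define H(x) = Σ_{i=1}^{N} h_i(A_i x − b_i). Let X = {x ∈ ℝⁿ : Cx ≤ d} be a nonempty polyhedron, let X* be the (nonempty) set of minimizers of H over X, let H* = min_{x∈X} H(x), and fix x* ∈ X*. Let Ã be the matrix obtained by stacking A_1, …, A_N vertically, and suppose θ > 0 is a constant satisfying the Hoffman-type bound dist(x, X*) ≤ θ·‖Ã(x − x*)‖ for every x ∈ X. Then for every x ∈ X: H(x) ≥ H* + (σ/2)·dist²(x, X*), where σ = (min_{1≤i≤N} σ_i)/θ². -/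
/-!
Strong convexity of each `h i` makes `H` strongly convex along the segment from `x*` to `x`, with
modulus `½ ∑ σ i ‖A i (x - x*)‖²`. As `x*` minimizes `H` on the convex set `X`, comparing `H` at
`x* + t (x - x*)` with `H x*` and letting `t → 0⁺` gives
`H x - H* ≥ ½ ∑ σ i ‖A i (x - x*)‖² ≥ ½ (min σ) ‖Ã (x - x*)‖²`,
and the Hoffman bound replaces `‖Ã (x - x*)‖` by `dist (x, X*) / θ`.
-/

open Set Filter Topology

theorem le_sub_of_isMinOn_of_le_segment {E : Type*} [AddCommGroup E] [Module ℝ E]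
    {s : Set E} {f : E → ℝ} {x y : E} {c : ℝ} (hs : Convex ℝ s) (hy : y ∈ s)
    (hmin : IsMinOn f s y) (hx : x ∈ s)
    (hseg : ∀ t ∈ Ioc (0 : ℝ) 1,
      f (t • x + (1 - t) • y) ≤ t * f x + (1 - t) * f y - t * (1 - t) * c) :
    c ≤ f x - f y := by
  have hbound : ∀ t ∈ Ioc (0 : ℝ) 1, (1 - t) * c ≤ f x - f y := fun t ht => by
    have hle : f y ≤ f (t • x + (1 - t) • y) :=
      hmin (hs hx hy ht.1.le (sub_nonneg.2 ht.2) (add_sub_cancel t 1))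
    have hmul : t * ((1 - t) * c) ≤ t * (f x - f y) := by linarith [hseg t ht]
    exact le_of_mul_le_mul_left hmul ht.1
  have hlim : Tendsto (fun t : ℝ => (1 - t) * c) (𝓝[>] 0) (𝓝 c) := by
    have : Continuous fun t : ℝ => (1 - t) * c := by fun_prop
    simpa using (this.tendsto 0).mono_left nhdsWithin_le_nhds
  exact le_of_tendsto hlim (eventually_of_mem (Ioc_mem_nhdsGT one_pos) hbound)

theorem StrongConvexOn.comp_affine_le_segment {E F : Type*} [AddCommGroup E] [Module ℝ E]
    [NormedAddCommGroup F] [NormedSpace ℝ F] {g : F → ℝ} {σ : ℝ}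
    (hg : StrongConvexOn univ σ g) (A : E →ₗ[ℝ] F) (b : F) (x y : E) {t : ℝ}
    (ht₀ : 0 ≤ t) (ht₁ : t ≤ 1) :
    g (A (t • x + (1 - t) • y) - b) ≤
      t * g (A x - b) + (1 - t) * g (A y - b) - t * (1 - t) * (σ / 2 * ‖A (x - y)‖ ^ 2) := by
  have hcomb : A (t • x + (1 - t) • y) - b = t • (A x - b) + (1 - t) • (A y - b) := by
    simp only [map_add, map_smul, smul_sub]
    module
  have hdiff : (A x - b) - (A y - b) = A (x - y) := by
    rw [map_sub, sub_sub_sub_cancel_right]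
  have := hg.2 (mem_univ (A x - b)) (mem_univ (A y - b)) ht₀ (sub_nonneg.2 ht₁)
    (add_sub_cancel t 1)
  rwa [hdiff, ← hcomb] at this

theorem sum_comp_affine_le_segment {ι E : Type*} [Fintype ι] [AddCommGroup E] [Module ℝ E]
    {F : ι → Type*} [∀ i, NormedAddCommGroup (F i)] [∀ i, NormedSpace ℝ (F i)]
    {g : (i : ι) → F i → ℝ} {σ : ι → ℝ} (hg : ∀ i, StrongConvexOn univ (σ i) (g i))
    (A : (i : ι) → E →ₗ[ℝ] F i) (b : (i : ι) → F i) (x y : E) {t : ℝ}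
    (ht₀ : 0 ≤ t) (ht₁ : t ≤ 1) :
    ∑ i, g i (A i (t • x + (1 - t) • y) - b i) ≤
      t * ∑ i, g i (A i x - b i) + (1 - t) * ∑ i, g i (A i y - b i) -
        t * (1 - t) * ∑ i, σ i / 2 * ‖A i (x - y)‖ ^ 2 := by
  calc ∑ i, g i (A i (t • x + (1 - t) • y) - b i)
      ≤ ∑ i, (t * g i (A i x - b i) + (1 - t) * g i (A i y - b i) -
          t * (1 - t) * (σ i / 2 * ‖A i (x - y)‖ ^ 2)) :=
        Finset.sum_le_sum fun i _ => (hg i).comp_affine_le_segment (A i) (b i) x y ht₀ ht₁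
    _ = _ := by
        simp only [Finset.mul_sum, Finset.sum_add_distrib, Finset.sum_sub_distrib]

theorem iInf_mul_sum_le_sum_mul {ι : Type*} [Fintype ι] (σ w : ι → ℝ) (hw : ∀ i, 0 ≤ w i) :
    (⨅ i, σ i) * ∑ i, w i ≤ ∑ i, σ i * w i := by
  rw [Finset.mul_sum]
  exact Finset.sum_le_sum fun i _ =>
    mul_le_mul_of_nonneg_right (ciInf_le (finite_range σ).bddBelow i) (hw i)

/-- `√(∑ i, ‖A i v‖²)` is `‖Ã v‖` for the vertically stacked matrix `Ã`. -/
theorem quadratic_growth_separable_composite_general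
    (n N q : ℕ) (m : Fin N → ℕ)
    (h : (i : Fin N) → EuclideanSpace ℝ (Fin (m i)) → ℝ)
    (σ : Fin N → ℝ) (hσ : ∀ i, 0 < σ i)
    (hsc : ∀ i, ConvexOn ℝ Set.univ (fun y => h i y - σ i / 2 * ‖y‖ ^ 2))
    (A : (i : Fin N) → EuclideanSpace ℝ (Fin n) →ₗ[ℝ] EuclideanSpace ℝ (Fin (m i)))
    (b : (i : Fin N) → EuclideanSpace ℝ (Fin (m i)))
    (C : EuclideanSpace ℝ (Fin n) →ₗ[ℝ] (Fin q → ℝ)) (d : Fin q → ℝ)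
    (X : Set (EuclideanSpace ℝ (Fin n)))
    (hX : X = {x | ∀ j, C x j ≤ d j})
    (H : EuclideanSpace ℝ (Fin n) → ℝ)
    (hH : ∀ x, H x = ∑ i, h i (A i x - b i))
    (Xstar : Set (EuclideanSpace ℝ (Fin n)))
    (hXstar : Xstar = {y | y ∈ X ∧ ∀ z ∈ X, H y ≤ H z})
    (Hstar : ℝ)
    (hHstar_val : ∀ y ∈ Xstar, H y = Hstar)
    (xstar : EuclideanSpace ℝ (Fin n)) (hxstarXstar : xstar ∈ Xstar)
    (θ : ℝ) (hθ : 0 < θ)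
    (hHoffman : ∀ x ∈ X,
      Metric.infDist x Xstar ≤ θ * Real.sqrt (∑ i, ‖A i (x - xstar)‖ ^ 2)) :
    ∀ x ∈ X,
      H x ≥ Hstar +
        ((⨅ i, σ i) / θ ^ 2) / 2 * (Metric.infDist x Xstar) ^ 2 := by
  intro x hx
  have hXconv : Convex ℝ X := hX ▸ (convex_Iic d).linear_preimage C
  obtain ⟨hxstarX, hmin⟩ : xstar ∈ X ∧ IsMinOn H X xstar := by
    rwa [hXstar] at hxstarXstar
  have hgrowth : ∑ i, σ i / 2 * ‖A i (x - xstar)‖ ^ 2 ≤ H x - Hstar :=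
    hHstar_val xstar hxstarXstar ▸ le_sub_of_isMinOn_of_le_segment hXconv hxstarX hmin hx
      fun t ht => by
        simpa only [hH] using sum_comp_affine_le_segment
          (fun i => strongConvexOn_iff_convex.2 (hsc i)) A b x xstar ht.1.le ht.2
  have hdist : Metric.infDist x Xstar ^ 2 ≤ θ ^ 2 * ∑ i, ‖A i (x - xstar)‖ ^ 2 := by
    have := pow_le_pow_left₀ Metric.infDist_nonneg (hHoffman x hx) 2
    rwa [mul_pow, Real.sq_sqrt (Finset.sum_nonneg fun i _ => sq_nonneg _)] at this
  have hσmin : 0 ≤ ⨅ i, σ i := Real.iInf_nonneg fun i => (hσ i).le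
  calc Hstar + ((⨅ i, σ i) / θ ^ 2) / 2 * Metric.infDist x Xstar ^ 2
      ≤ Hstar + ((⨅ i, σ i) / θ ^ 2) / 2 * (θ ^ 2 * ∑ i, ‖A i (x - xstar)‖ ^ 2) := by
        gcongr
    _ = Hstar + (⨅ i, σ i) * (∑ i, ‖A i (x - xstar)‖ ^ 2) / 2 := by
        field_simp
    _ ≤ Hstar + (∑ i, σ i * ‖A i (x - xstar)‖ ^ 2) / 2 := by
        gcongr
        exact iInf_mul_sum_le_sum_mul σ _ fun i => sq_nonneg _
    _ = Hstar + ∑ i, σ i / 2 * ‖A i (x - xstar)‖ ^ 2 := by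
        simp_rw [Finset.sum_div, div_mul_eq_mul_div]
    _ ≤ H x := by linarith

/-- Lemma 4: quadratic growth of separable strongly convex
composites over a polyhedron, given a Hoffman-type error bound.  The norm of
the vertically stacked matrix `Ã` applied to `x − x*` is
`√(∑ i ‖A i (x − x*)‖²)`. -/
theorem quadratic_growth_separable_composite
    (n N q : ℕ) (hN : 0 < N) (m : Fin N → ℕ)
    (h : (i : Fin N) → EuclideanSpace ℝ (Fin (m i)) → ℝ)
    (σ : Fin N → ℝ) (hσ : ∀ i, 0 < σ i)
    (hsc : ∀ i, ConvexOn ℝ Set.univ (fun y => h i y - σ i / 2 * ‖y‖ ^ 2))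
    (A : (i : Fin N) → EuclideanSpace ℝ (Fin n) →ₗ[ℝ] EuclideanSpace ℝ (Fin (m i)))
    (b : (i : Fin N) → EuclideanSpace ℝ (Fin (m i)))
    (C : EuclideanSpace ℝ (Fin n) →ₗ[ℝ] (Fin q → ℝ)) (d : Fin q → ℝ)
    (X : Set (EuclideanSpace ℝ (Fin n)))
    (hX : X = {x | ∀ j, C x j ≤ d j})
    (hXne : X.Nonempty)
    (H : EuclideanSpace ℝ (Fin n) → ℝ)
    (hH : ∀ x, H x = ∑ i, h i (A i x - b i))
    (Xstar : Set (EuclideanSpace ℝ (Fin n)))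
    (hXstar : Xstar = {y | y ∈ X ∧ ∀ z ∈ X, H y ≤ H z})
    (hXstar_ne : Xstar.Nonempty)
    (Hstar : ℝ)
    (hHstar_val : ∀ y ∈ Xstar, H y = Hstar)
    (hHstar_min : ∀ x ∈ X, Hstar ≤ H x)
    (xstar : EuclideanSpace ℝ (Fin n)) (hxstarXstar : xstar ∈ Xstar)
    (θ : ℝ) (hθ : 0 < θ)
    (hHoffman : ∀ x ∈ X,
      Metric.infDist x Xstar ≤ θ * Real.sqrt (∑ i, ‖A i (x - xstar)‖ ^ 2)) :
    ∀ x ∈ X,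
      H x ≥ Hstar +
        ((⨅ i, σ i) / θ ^ 2) / 2 * (Metric.infDist x Xstar) ^ 2 :=
  quadratic_growth_separable_composite_general n N q m h σ hσ hsc A b C d X hX H hH Xstar hXstar
    Hstar hHstar_val xstar hxstarXstar θ hθ hHoffman
end
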